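/- arXiv:2105.04750 — 11 statements merged into one kernel-verified Lean document; each statement's English description precedes it below -/
import Mathlib

section
/- Consider the discrete-time networked SIR model under Assumptions 1 and 2. Then for every node i ∈ V and every time step k ∈ ℤ≥0, the states satisfy s_i[k] ∈ [0,1], x_i[k] ∈ [0,1], r_i[k] ∈ [0,1], and s_i[k] + x_i[k] + r_i[k] = 1. -/
/-!
Each step moves the mass `p = h s_i β ∑_j a_ij x_j` from `S` to `I` and the mass `hδ x_i` from
`I` to `R`, so `s_i + x_i + r_i` is conserved. The states stay nonnegative because `0 ≤ hδ ≤ 1`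
and `0 ≤ p ≤ s_i`, the latter since all `x_j ∈ [0,1]` and `hβ ∑_j a_ij < 1`. Induction on `k`
with the invariant "nonnegative and summing to one" gives the claim.
-/

open Set

def IsSIRState (s x r : ℝ) : Prop :=
  0 ≤ s ∧ 0 ≤ x ∧ 0 ≤ r ∧ s + x + r = 1

namespace IsSIRState

variable {s x r : ℝ}

theorem mem_Icc (hsxr : IsSIRState s x r) : s ∈ Icc 0 1 ∧ x ∈ Icc 0 1 ∧ r ∈ Icc 0 1 := by
  obtain ⟨hs, hx, hr, hsum⟩ := hsxr
  exact ⟨⟨hs, by linarith⟩, ⟨hx, by linarith⟩, ⟨hr, by linarith⟩⟩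

theorem step {p γ : ℝ} (hsxr : IsSIRState s x r) (hγ : γ ∈ Icc 0 1) (hp : p ∈ Icc 0 s) :
    IsSIRState (s - p) ((1 - γ) * x + p) (r + γ * x) := by
  obtain ⟨-, hx, hr, hsum⟩ := hsxr
  have hx' : 0 ≤ (1 - γ) * x := mul_nonneg (by linarith [hγ.2]) hx
  have hr' : 0 ≤ γ * x := mul_nonneg hγ.1 hx
  exact ⟨by linarith [hp.2], by linarith [hp.1], by linarith, by linarith⟩

end IsSIRState

theorem new_infections_mem_Icc {ι : Type*} [Fintype ι] {a x : ι → ℝ} {h β s : ℝ}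
    (hh : 0 ≤ h) (hβ : 0 ≤ β) (ha : ∀ j, 0 ≤ a j) (hx : ∀ j, x j ∈ Icc 0 1)
    (hrow : h * β * ∑ j, a j ≤ 1) (hs : 0 ≤ s) :
    h * s * β * ∑ j, a j * x j ∈ Icc 0 s := by
  have hsum_nonneg : 0 ≤ ∑ j, a j * x j :=
    Finset.sum_nonneg fun j _ => mul_nonneg (ha j) (hx j).1
  have hsum_le : ∑ j, a j * x j ≤ ∑ j, a j :=
    Finset.sum_le_sum fun j _ => mul_le_of_le_one_right (ha j) (hx j).2
  have hpressure : h * β * ∑ j, a j * x j ≤ 1 :=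
    (mul_le_mul_of_nonneg_left hsum_le (mul_nonneg hh hβ)).trans hrow
  refine ⟨by positivity, ?_⟩
  calc h * s * β * ∑ j, a j * x j = s * (h * β * ∑ j, a j * x j) := by ring
    _ ≤ s * 1 := mul_le_mul_of_nonneg_left hpressure hs
    _ = s := mul_one s

theorem sir_states_in_unit_interval_and_sum_one_general
    {n : ℕ} (a : Fin n → Fin n → ℝ)
    (h β δ : ℝ) (s x r : Fin n → ℕ → ℝ)
    -- SIR dynamics
    (hdynS : ∀ i k, s i (k + 1) = s i k - h * s i k * β * ∑ j, a i j * x j k)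
    (hdynX : ∀ i k, x i (k + 1) = (1 - h * δ) * x i k + h * s i k * β * ∑ j, a i j * x j k)
    (hdynR : ∀ i k, r i (k + 1) = r i k + h * δ * x i k)
    -- Assumption 1 (initial conditions)
    (hs0 : ∀ i, 0 < s i 0 ∧ s i 0 ≤ 1)
    (hx0 : ∀ i, 0 ≤ x i 0 ∧ x i 0 < 1)
    (hr0 : ∀ i, r i 0 = 0)
    (hsum0 : ∀ i, s i 0 + x i 0 = 1)
    -- Assumption 2 (model parameters)
    (hh : 0 < h) (hβ : 0 < β) (hδ : 0 < δ) (hhδ : h * δ < 1)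
    (haNonneg : ∀ i j, 0 ≤ a i j)
    (hRow : ∀ i, h * β * ∑ j, a i j < 1) :
    ∀ (i : Fin n) (k : ℕ),
      s i k ∈ Set.Icc (0 : ℝ) 1 ∧ x i k ∈ Set.Icc (0 : ℝ) 1 ∧
        r i k ∈ Set.Icc (0 : ℝ) 1 ∧ s i k + x i k + r i k = 1 := by
  have hγ : h * δ ∈ Icc 0 1 := ⟨by positivity, hhδ.le⟩
  have hinv : ∀ k i, IsSIRState (s i k) (x i k) (r i k) := by
    intro k
    induction k with
    | zero =>
      intro i
      exact ⟨(hs0 i).1.le, (hx0 i).1, (hr0 i).ge, by rw [hr0, add_zero, hsum0]⟩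
    | succ k ih =>
      intro i
      rw [hdynS, hdynX, hdynR]
      exact (ih i).step hγ <| new_infections_mem_Icc hh.le hβ.le (haNonneg i)
        (fun j => (ih j).mem_Icc.2.1) (hRow i).le (ih i).1
  intro i k
  obtain ⟨hs, hx, hr⟩ := (hinv k i).mem_Icc
  exact ⟨hs, hx, hr, (hinv k i).2.2.2⟩

/-- Under Assumptions 1 and 2, for every node `i` and time `k`,
`s_i[k], x_i[k], r_i[k] ∈ [0,1]` and `s_i[k] + x_i[k] + r_i[k] = 1`. -/
theorem sir_states_in_unit_interval_and_sum_one
    {n : ℕ} (E : Fin n → Fin n → Prop) (a : Fin n → Fin n → ℝ)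
    (h β δ : ℝ) (s x r : Fin n → ℕ → ℝ)
    -- SIR dynamics
    (hdynS : ∀ i k, s i (k + 1) = s i k - h * s i k * β * ∑ j, a i j * x j k)
    (hdynX : ∀ i k, x i (k + 1) = (1 - h * δ) * x i k + h * s i k * β * ∑ j, a i j * x j k)
    (hdynR : ∀ i k, r i (k + 1) = r i k + h * δ * x i k)
    -- Assumption 1 (initial conditions)
    (hs0 : ∀ i, 0 < s i 0 ∧ s i 0 ≤ 1)
    (hx0 : ∀ i, 0 ≤ x i 0 ∧ x i 0 < 1)
    (hr0 : ∀ i, r i 0 = 0)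
    (hsum0 : ∀ i, s i 0 + x i 0 = 1)
    -- Assumption 2 (model parameters)
    (hh : 0 < h) (hβ : 0 < β) (hδ : 0 < δ) (hhδ : h * δ < 1)
    (haE : ∀ i j, E j i → 0 < a i j)
    (haNonneg : ∀ i j, 0 ≤ a i j)
    (haZero : ∀ i j, ¬ E j i → j ≠ i → a i j = 0)
    (hRow : ∀ i, h * β * ∑ j, a i j < 1) :
    ∀ (i : Fin n) (k : ℕ),
      s i k ∈ Set.Icc (0 : ℝ) 1 ∧ x i k ∈ Set.Icc (0 : ℝ) 1 ∧
        r i k ∈ Set.Icc (0 : ℝ) 1 ∧ s i k + x i k + r i k = 1 :=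
  sir_states_in_unit_interval_and_sum_one_general a h β δ s x r hdynS hdynX hdynR hs0 hx0 hr0 hsum0
    hh hβ hδ hhδ haNonneg hRow
end

section
/- Consider the discrete-time networked SIR model under Assumptions 1 and 2. Then for every node i ∈ V and every time step k ∈ ℤ≥0, s_i[k] > 0. -/
/-!
The region `s > 0, x ≥ 0, s + x ≤ 1` is forward invariant under every node's update. Inside it
all `x_j ≤ 1`, so the infection pressure `h β ∑ⱼ a_{ij} x_j` is below the row bound
`h β ∑ⱼ a_{ij} < 1`, and `s_i[k+1] = s_i[k] (1 - h β ∑ⱼ a_{ij} x_j[k])` stays positive; the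
infected mass moved out of `s_i` reappears in `x_i`, which only loses `h δ x_i ≥ 0`.
-/

section SIRStep

variable {ι : Type*} [Fintype ι]

theorem weighted_sum_lt_one_of_le_one {c : ℝ} {a x : ι → ℝ} (hc : 0 ≤ c)
    (ha : ∀ j, 0 ≤ a j) (hx : ∀ j, x j ≤ 1) (hrow : c * ∑ j, a j < 1) :
    c * ∑ j, a j * x j < 1 := by
  have hsum : ∑ j, a j * x j ≤ ∑ j, a j :=
    Finset.sum_le_sum fun j _ => mul_le_of_le_one_right (ha j) (hx j)
  exact (mul_le_mul_of_nonneg_left hsum hc).trans_lt hrow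

variable {h β δ s x p : ℝ}

theorem susceptible_step_pos (hs : 0 < s) (hp : h * β * p < 1) :
    0 < s - h * s * β * p := by
  have : s - h * s * β * p = s * (1 - h * β * p) := by ring
  rw [this]
  exact mul_pos hs (by linarith)

theorem infected_step_nonneg (hh : 0 ≤ h) (hβ : 0 ≤ β) (hhδ : h * δ ≤ 1) (hs : 0 ≤ s)
    (hx : 0 ≤ x) (hp : 0 ≤ p) :
    0 ≤ (1 - h * δ) * x + h * s * β * p := by
  have : 0 ≤ 1 - h * δ := by linarith
  positivity

theorem step_total_le (hh : 0 ≤ h) (hδ : 0 ≤ δ) (hx : 0 ≤ x) :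
    (s - h * s * β * p) + ((1 - h * δ) * x + h * s * β * p) ≤ s + x := by
  have : 0 ≤ h * δ * x := by positivity
  linarith

end SIRStep

theorem sir_state_invariant {ι : Type*} [Fintype ι] (a : ι → ι → ℝ) (h β δ : ℝ)
    (s x : ι → ℕ → ℝ)
    (hdynS : ∀ i k, s i (k + 1) = s i k - h * s i k * β * ∑ j, a i j * x j k)
    (hdynX : ∀ i k, x i (k + 1) = (1 - h * δ) * x i k + h * s i k * β * ∑ j, a i j * x j k)
    (hinit : ∀ i, 0 < s i 0 ∧ 0 ≤ x i 0 ∧ s i 0 + x i 0 ≤ 1)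
    (hh : 0 ≤ h) (hβ : 0 ≤ β) (hδ : 0 ≤ δ) (hhδ : h * δ ≤ 1)
    (haNonneg : ∀ i j, 0 ≤ a i j) (hRow : ∀ i, h * β * ∑ j, a i j < 1) (k : ℕ) :
    ∀ i, 0 < s i k ∧ 0 ≤ x i k ∧ s i k + x i k ≤ 1 := by
  induction k with
  | zero => exact hinit
  | succ k ih =>
    intro i
    obtain ⟨hs, hx, hsx⟩ := ih i
    have hp : 0 ≤ ∑ j, a i j * x j k :=
      Finset.sum_nonneg fun j _ => mul_nonneg (haNonneg i j) (ih j).2.1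
    have hp1 : h * β * ∑ j, a i j * x j k < 1 :=
      weighted_sum_lt_one_of_le_one (mul_nonneg hh hβ) (haNonneg i)
        (fun j => by linarith [(ih j).1, (ih j).2.2]) (hRow i)
    rw [hdynS, hdynX]
    exact ⟨susceptible_step_pos hs hp1, infected_step_nonneg hh hβ hhδ hs.le hx hp,
      (step_total_le hh hδ hx).trans hsx⟩

theorem sir_susceptible_pos_general
    {n : ℕ} (a : Fin n → Fin n → ℝ)
    (h β δ : ℝ) (s x : Fin n → ℕ → ℝ)
    -- SIR dynamics
    (hdynS : ∀ i k, s i (k + 1) = s i k - h * s i k * β * ∑ j, a i j * x j k)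
    (hdynX : ∀ i k, x i (k + 1) = (1 - h * δ) * x i k + h * s i k * β * ∑ j, a i j * x j k)
    -- Assumption 1 (initial conditions)
    (hx0 : ∀ i, 0 ≤ x i 0 ∧ x i 0 < 1)
    (hsum0 : ∀ i, s i 0 + x i 0 = 1)
    -- Assumption 2 (model parameters)
    (hh : 0 < h) (hβ : 0 < β) (hδ : 0 < δ) (hhδ : h * δ < 1)
    (haNonneg : ∀ i j, 0 ≤ a i j)
    (hRow : ∀ i, h * β * ∑ j, a i j < 1) :
    ∀ (i : Fin n) (k : ℕ), 0 < s i k := by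
  have hinit : ∀ i, 0 < s i 0 ∧ 0 ≤ x i 0 ∧ s i 0 + x i 0 ≤ 1 := fun i =>
    ⟨by linarith [hx0 i, hsum0 i], (hx0 i).1, (hsum0 i).le⟩
  intro i k
  exact (sir_state_invariant a h β δ s x hdynS hdynX hinit hh.le hβ.le hδ.le hhδ.le
    haNonneg hRow k i).1

/-- Under Assumptions 1 and 2, for every node `i` and time `k`,
`s_i[k] > 0`. -/
theorem sir_susceptible_pos
    {n : ℕ} (E : Fin n → Fin n → Prop) (a : Fin n → Fin n → ℝ)
    (h β δ : ℝ) (s x r : Fin n → ℕ → ℝ)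
    -- SIR dynamics
    (hdynS : ∀ i k, s i (k + 1) = s i k - h * s i k * β * ∑ j, a i j * x j k)
    (hdynX : ∀ i k, x i (k + 1) = (1 - h * δ) * x i k + h * s i k * β * ∑ j, a i j * x j k)
    (hdynR : ∀ i k, r i (k + 1) = r i k + h * δ * x i k)
    -- Assumption 1 (initial conditions)
    (hs0 : ∀ i, 0 < s i 0 ∧ s i 0 ≤ 1)
    (hx0 : ∀ i, 0 ≤ x i 0 ∧ x i 0 < 1)
    (hr0 : ∀ i, r i 0 = 0)
    (hsum0 : ∀ i, s i 0 + x i 0 = 1)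
    -- Assumption 2 (model parameters)
    (hh : 0 < h) (hβ : 0 < β) (hδ : 0 < δ) (hhδ : h * δ < 1)
    (haE : ∀ i j, E j i → 0 < a i j)
    (haNonneg : ∀ i j, 0 ≤ a i j)
    (haZero : ∀ i j, ¬ E j i → j ≠ i → a i j = 0)
    (hRow : ∀ i, h * β * ∑ j, a i j < 1) :
    ∀ (i : Fin n) (k : ℕ), 0 < s i k :=
  sir_susceptible_pos_general a h β δ s x hdynS hdynX hx0 hsum0 hh hβ hδ hhδ haNonneg hRow
end

section
/- Consider the discrete-time networked SIR model under Assumptions 1 and 2. Let i ∈ V be a node with d_i ≠ +∞. Then x_i[k] = 0 for all time steps k < d_i, and x_i[k] ∈ (0,1) for all time steps k ≥ d_i. -/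
/-!
Discrete-time networked SIR model (Section 2 of the paper).

Nodes are `Fin n`.  `E j i` means there is a directed edge `(j,i)` from `j` to `i`
(self-loops allowed).  Since the weights satisfy `a i j = 0` whenever
`j ∉ N̄_i = {j : E j i} ∪ {i}`, the sum `∑_{j ∈ N̄_i} a_{ij} x_j[k]` coincides with
`∑ j, a i j * x j k`.
-/

/-- There is a directed walk of length `t` from node `j` to node `i` in the graph with
edge relation `E` (a directed path of length `t` is a sequence of `t` directed edges). -/
def HasWalk {n : ℕ} (E : Fin n → Fin n → Prop) (t : ℕ) (j i : Fin n) : Prop :=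
  ∃ p : ℕ → Fin n, p 0 = j ∧ p t = i ∧ ∀ l < t, E (p l) (p (l + 1))

/-- `d_i` of Definition 3: the (extended-natural-number) distance from the initially
infected set `S_I = {j : x_j[0] > 0}` to node `i`; it equals `0` if `i ∈ S_I`, the
shortest length of a directed path from some node of `S_I` to `i` if one exists,
and `⊤` (i.e. `+∞`) otherwise. -/
noncomputable def distToInfected {n : ℕ} (E : Fin n → Fin n → Prop)
    (x : Fin n → ℕ → ℝ) (i : Fin n) : ℕ∞ :=
  sInf {t : ℕ∞ | ∃ t' : ℕ, (t' : ℕ∞) = t ∧ ∃ j : Fin n, 0 < x j 0 ∧ HasWalk E t' j i}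

/-
Node `i` is infected at time `k` exactly when some initially infected node reaches it by a walk
of length at most `k`. Both the recovery term `(1 - hδ) x_i` and the infection term
`h s_i β ∑ a_ij x_j` are nonnegative, the first positive iff `x_i > 0` and the second positive iff
some in-neighbour of `i` is infected (this uses `s_i > 0`, which `hβ ∑ a_ij < 1` keeps alive).
Hence infection spreads exactly one edge per step and never dies out, and `x_i < 1` because
`s_i + x_i` does not increase.
-/

def ReachableWithin {n : ℕ} (E : Fin n → Fin n → Prop) (k : ℕ) (j i : Fin n) : Prop :=
  ∃ t ≤ k, HasWalk E t j i

section Graph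

variable {n : ℕ} {E : Fin n → Fin n → Prop}

lemma hasWalk_zero_iff {j i : Fin n} : HasWalk E 0 j i ↔ j = i := by
  constructor
  · rintro ⟨p, rfl, rfl, -⟩
    rfl
  · rintro rfl
    exact ⟨fun _ => j, rfl, rfl, fun _ h => absurd h (Nat.not_lt_zero _)⟩

lemma hasWalk_succ_iff {t : ℕ} {j i : Fin n} :
    HasWalk E (t + 1) j i ↔ ∃ l, HasWalk E t j l ∧ E l i := by
  constructor
  · rintro ⟨p, h0, ht, hE⟩
    exact ⟨p t, ⟨p, h0, rfl, fun l hl => hE l (by omega)⟩, ht ▸ hE t t.lt_succ_self⟩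
  · rintro ⟨l, ⟨p, h0, ht, hE⟩, he⟩
    refine ⟨fun u => if u ≤ t then p u else i, by simp [h0], by simp, fun u hu => ?_⟩
    rcases Nat.lt_or_ge u t with hut | hut
    · simpa [hut.le, Nat.succ_le_of_lt hut] using hE u hut
    · obtain rfl : u = t := by omega
      simpa [ht] using he

lemma reachableWithin_zero_iff {j i : Fin n} : ReachableWithin E 0 j i ↔ j = i := by
  simp [ReachableWithin, hasWalk_zero_iff]

lemma reachableWithin_succ_iff {k : ℕ} {j i : Fin n} :
    ReachableWithin E (k + 1) j i ↔
      ReachableWithin E k j i ∨ ∃ l, ReachableWithin E k j l ∧ E l i := by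
  constructor
  · rintro ⟨t, htk, hw⟩
    rcases Nat.le_succ_iff.1 htk with htk | rfl
    · exact .inl ⟨t, htk, hw⟩
    · obtain ⟨l, hw, he⟩ := hasWalk_succ_iff.1 hw
      exact .inr ⟨l, ⟨k, le_rfl, hw⟩, he⟩
  · rintro (⟨t, htk, hw⟩ | ⟨l, ⟨t, htk, hw⟩, he⟩)
    · exact ⟨t, htk.trans k.le_succ, hw⟩
    · exact ⟨t + 1, by omega, hasWalk_succ_iff.2 ⟨l, hw, he⟩⟩

lemma distToInfected_le_coe_iff {x : Fin n → ℕ → ℝ} {i : Fin n} {k : ℕ} :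
    distToInfected E x i ≤ k ↔ ∃ j, 0 < x j 0 ∧ ReachableWithin E k j i := by
  constructor
  · intro hk
    have hne :
        {t : ℕ∞ | ∃ t' : ℕ, (t' : ℕ∞) = t ∧ ∃ j, 0 < x j 0 ∧ HasWalk E t' j i}.Nonempty := by
      by_contra hempty
      rw [Set.not_nonempty_iff_eq_empty] at hempty
      simp [distToInfected, hempty] at hk
    obtain ⟨t, ht, j, hj, hw⟩ := csInf_mem hne
    rw [distToInfected, ← ht, Nat.cast_le] at hk
    exact ⟨j, hj, t, hk, hw⟩
  · rintro ⟨j, hj, t, htk, hw⟩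
    have hdt : distToInfected E x i ≤ t := sInf_le ⟨t, rfl, j, hj, hw⟩
    exact hdt.trans (Nat.cast_le.2 htk)

lemma pos_iff_exists_reachableWithin {x : Fin n → ℕ → ℝ}
    (hstep : ∀ k i, 0 < x i (k + 1) ↔ 0 < x i k ∨ ∃ l, E l i ∧ 0 < x l k) (k : ℕ) (i : Fin n) :
    0 < x i k ↔ ∃ j, 0 < x j 0 ∧ ReachableWithin E k j i := by
  induction k generalizing i with
  | zero => simp [reachableWithin_zero_iff]
  | succ k ih =>
    simp only [hstep k i, ih, reachableWithin_succ_iff]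
    constructor
    · rintro (⟨j, hj, hr⟩ | ⟨l, hE, j, hj, hr⟩)
      exacts [⟨j, hj, .inl hr⟩, ⟨j, hj, .inr ⟨l, hr, hE⟩⟩]
    · rintro ⟨j, hj, hr | ⟨l, hr, hE⟩⟩
      exacts [.inl ⟨j, hj, hr⟩, .inr ⟨l, hE, j, hj, hr⟩]

end Graph

lemma sum_mul_pos_iff_of_nonneg {ι : Type*} [Fintype ι] {a y : ι → ℝ}
    (ha : ∀ j, 0 ≤ a j) (hy : ∀ j, 0 ≤ y j) :
    0 < ∑ j, a j * y j ↔ ∃ j, 0 < a j ∧ 0 < y j := by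
  rw [Finset.sum_pos_iff_of_nonneg fun j _ => mul_nonneg (ha j) (hy j)]
  refine exists_congr fun j =>
    ⟨fun ⟨_, hpos⟩ => ?_, fun hj => ⟨Finset.mem_univ j, mul_pos hj.1 hj.2⟩⟩
  exact ⟨(ha j).lt_of_ne fun h0 => by simp [← h0] at hpos,
    (hy j).lt_of_ne fun h0 => by simp [← h0] at hpos⟩

section SIR

variable {n : ℕ} {E : Fin n → Fin n → Prop} {a : Fin n → Fin n → ℝ} {h β δ : ℝ}
  {s x : Fin n → ℕ → ℝ}

lemma sir_bounds
    (hdynS : ∀ i k, s i (k + 1) = s i k - h * s i k * β * ∑ j, a i j * x j k)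
    (hdynX : ∀ i k, x i (k + 1) = (1 - h * δ) * x i k + h * s i k * β * ∑ j, a i j * x j k)
    (hs0 : ∀ i, 0 < s i 0 ∧ s i 0 ≤ 1) (hsum0 : ∀ i, s i 0 + x i 0 = 1)
    (hh : 0 < h) (hβ : 0 < β) (hδ : 0 < δ) (hhδ : h * δ < 1)
    (haNonneg : ∀ i j, 0 ≤ a i j) (hRow : ∀ i, h * β * ∑ j, a i j < 1) (k : ℕ) (i : Fin n) :
    0 < s i k ∧ 0 ≤ x i k ∧ s i k + x i k ≤ 1 := by
  induction k generalizing i with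
  | zero => exact ⟨(hs0 i).1, by linarith [hs0 i, hsum0 i], (hsum0 i).le⟩
  | succ k ih =>
    obtain ⟨hs, hx, hsx⟩ := ih i
    have hP : 0 ≤ ∑ j, a i j * x j k :=
      Finset.sum_nonneg fun j _ => mul_nonneg (haNonneg i j) (ih j).2.1
    have hP_lt : h * β * ∑ j, a i j * x j k < 1 := by
      refine lt_of_le_of_lt (mul_le_mul_of_nonneg_left ?_ (by positivity)) (hRow i)
      exact Finset.sum_le_sum fun j _ =>
        mul_le_of_le_one_right (haNonneg i j) (by linarith [ih j])
    rw [hdynS, hdynX]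
    refine ⟨?_, ?_, ?_⟩
    · nlinarith [mul_pos hs (sub_pos.2 hP_lt)]
    · have := mul_nonneg (sub_nonneg.2 hhδ.le) hx
      positivity
    · nlinarith [mul_nonneg (mul_nonneg hh.le hδ.le) hx]

lemma sir_infected_succ_iff
    (hdynX : ∀ i k, x i (k + 1) = (1 - h * δ) * x i k + h * s i k * β * ∑ j, a i j * x j k)
    (hh : 0 < h) (hβ : 0 < β) (hhδ : h * δ < 1)
    (haE : ∀ i j, E j i → 0 < a i j) (haNonneg : ∀ i j, 0 ≤ a i j)
    (haZero : ∀ i j, ¬ E j i → j ≠ i → a i j = 0)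
    {k : ℕ} {i : Fin n} (hs : 0 < s i k) (hx : ∀ j, 0 ≤ x j k) :
    0 < x i (k + 1) ↔ 0 < x i k ∨ ∃ l, E l i ∧ 0 < x l k := by
  have hrec : 0 < (1 - h * δ) * x i k ↔ 0 < x i k := mul_pos_iff_of_pos_left (by linarith)
  have hinf : 0 < h * s i k * β * ∑ j, a i j * x j k ↔ ∃ l, 0 < a i l ∧ 0 < x l k := by
    rw [mul_pos_iff_of_pos_left (by positivity), sum_mul_pos_iff_of_nonneg (haNonneg i) hx]
  have hrec_nonneg : 0 ≤ (1 - h * δ) * x i k := mul_nonneg (by linarith) (hx i)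
  have hinf_nonneg : 0 ≤ h * s i k * β * ∑ j, a i j * x j k :=
    mul_nonneg (by positivity) (Finset.sum_nonneg fun j _ => mul_nonneg (haNonneg i j) (hx j))
  rw [hdynX]
  constructor
  · intro hpos
    by_cases hxi : 0 < x i k
    · exact .inl hxi
    · obtain ⟨l, hal, hxl⟩ := hinf.1 (by linarith [hrec.not.2 hxi])
      have hli : l ≠ i := by rintro rfl; exact hxi hxl
      exact .inr ⟨l, not_not.1 fun hE => hal.ne' (haZero i l hE hli), hxl⟩
  · rintro (hxi | ⟨l, hE, hxl⟩)
    · linarith [hrec.2 hxi]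
    · linarith [hinf.2 ⟨l, haE i l hE, hxl⟩]

end SIR

theorem sir_infected_zero_before_dist_pos_after_general
    {n : ℕ} (E : Fin n → Fin n → Prop) (a : Fin n → Fin n → ℝ)
    (h β δ : ℝ) (s x : Fin n → ℕ → ℝ)
    -- SIR dynamics
    (hdynS : ∀ i k, s i (k + 1) = s i k - h * s i k * β * ∑ j, a i j * x j k)
    (hdynX : ∀ i k, x i (k + 1) = (1 - h * δ) * x i k + h * s i k * β * ∑ j, a i j * x j k)
    -- Assumption 1 (initial conditions)
    (hs0 : ∀ i, 0 < s i 0 ∧ s i 0 ≤ 1)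
    (hsum0 : ∀ i, s i 0 + x i 0 = 1)
    -- Assumption 2 (model parameters)
    (hh : 0 < h) (hβ : 0 < β) (hδ : 0 < δ) (hhδ : h * δ < 1)
    (haE : ∀ i j, E j i → 0 < a i j)
    (haNonneg : ∀ i j, 0 ≤ a i j)
    (haZero : ∀ i j, ¬ E j i → j ≠ i → a i j = 0)
    (hRow : ∀ i, h * β * ∑ j, a i j < 1)
    (i : Fin n) :
    (∀ k : ℕ, (k : ℕ∞) < distToInfected E x i → x i k = 0) ∧
      (∀ k : ℕ, distToInfected E x i ≤ (k : ℕ∞) → x i k ∈ Set.Ioo (0 : ℝ) 1) := by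
  have hbounds := sir_bounds hdynS hdynX hs0 hsum0 hh hβ hδ hhδ haNonneg hRow
  have hinfected (k : ℕ) : 0 < x i k ↔ distToInfected E x i ≤ k := by
    rw [distToInfected_le_coe_iff]
    refine pos_iff_exists_reachableWithin (fun k j => ?_) k i
    exact sir_infected_succ_iff hdynX hh hβ hhδ haE haNonneg haZero (hbounds k j).1
      fun l => (hbounds k l).2.1
  refine ⟨fun k hk => ?_, fun k hk => ⟨(hinfected k).2 hk, ?_⟩⟩
  · exact le_antisymm (not_lt.1 fun hpos => ((hinfected k).1 hpos).not_gt hk) (hbounds k i).2.1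
  · linarith [hbounds k i]

/-- Lemma 1(b): Under Assumptions 1 and 2, if `d_i ≠ +∞`, then
`x_i[k] = 0` for all `k < d_i` and `x_i[k] ∈ (0,1)` for all `k ≥ d_i`. -/
theorem sir_infected_zero_before_dist_pos_after
    {n : ℕ} (E : Fin n → Fin n → Prop) (a : Fin n → Fin n → ℝ)
    (h β δ : ℝ) (s x r : Fin n → ℕ → ℝ)
    -- SIR dynamics
    (hdynS : ∀ i k, s i (k + 1) = s i k - h * s i k * β * ∑ j, a i j * x j k)
    (hdynX : ∀ i k, x i (k + 1) = (1 - h * δ) * x i k + h * s i k * β * ∑ j, a i j * x j k)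
    (hdynR : ∀ i k, r i (k + 1) = r i k + h * δ * x i k)
    -- Assumption 1 (initial conditions)
    (hs0 : ∀ i, 0 < s i 0 ∧ s i 0 ≤ 1)
    (hx0 : ∀ i, 0 ≤ x i 0 ∧ x i 0 < 1)
    (hr0 : ∀ i, r i 0 = 0)
    (hsum0 : ∀ i, s i 0 + x i 0 = 1)
    -- Assumption 2 (model parameters)
    (hh : 0 < h) (hβ : 0 < β) (hδ : 0 < δ) (hhδ : h * δ < 1)
    (haE : ∀ i j, E j i → 0 < a i j)
    (haNonneg : ∀ i j, 0 ≤ a i j)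
    (haZero : ∀ i j, ¬ E j i → j ≠ i → a i j = 0)
    (hRow : ∀ i, h * β * ∑ j, a i j < 1)
    (i : Fin n) (hdi : distToInfected E x i ≠ ⊤) :
    (∀ k : ℕ, (k : ℕ∞) < distToInfected E x i → x i k = 0) ∧
      (∀ k : ℕ, distToInfected E x i ≤ (k : ℕ∞) → x i k ∈ Set.Ioo (0 : ℝ) 1) :=
  sir_infected_zero_before_dist_pos_after_general E a h β δ s x hdynS hdynX hs0 hsum0 hh hβ hδ hhδ
    haE haNonneg haZero hRow i
end

section
/- Consider the discrete-time networked SIR model under Assumptions 1 and 2. Let i ∈ V be a node with d_i ≠ +∞. Then r_i[k] = 0 for all time steps k ≤ d_i, and r_i[k] ∈ (0,1) for all time steps k > d_i. -/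
/-!
Infection can only travel one edge per time step, since `x_i[k+1]` is positive exactly when
`x_i[k]` or some in-neighbour's `x_j[k]` is; and once positive it stays positive because
`1 - hδ > 0`. Hence `x_i[k] = 0` for `k < d_i` and `x_i[d_i] > 0`. As
`r_i[k] = hδ ∑_{m<k} x_i[m]`, this gives `r_i[k] = 0` for `k ≤ d_i` and `r_i[k] > 0` afterwards,
while `r_i[k] < 1` follows from the conservation law `s_i + x_i + r_i = 1` and `s_i > 0`.
-/

open Finset

namespace HasWalk

variable {n : ℕ} {E : Fin n → Fin n → Prop}

theorem refl (i : Fin n) : HasWalk E 0 i i :=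
  ⟨fun _ => i, rfl, rfl, fun l hl => absurd hl (Nat.not_lt_zero l)⟩

theorem eq_of_zero {j i : Fin n} (hw : HasWalk E 0 j i) : j = i := by
  obtain ⟨p, hp0, hpt, -⟩ := hw
  exact hp0 ▸ hpt

theorem snoc {t : ℕ} {j m i : Fin n} (hw : HasWalk E t j m) (he : E m i) :
    HasWalk E (t + 1) j i := by
  obtain ⟨p, hp0, hpt, hpe⟩ := hw
  refine ⟨fun l => if l ≤ t then p l else i, by simpa using hp0, by simp, fun l hl => ?_⟩
  rcases Nat.lt_or_ge l t with hlt | hge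
  · simpa [hlt.le, Nat.succ_le_of_lt hlt] using hpe l hlt
  · obtain rfl : l = t := by omega
    simpa [hpt] using he

theorem exists_snoc {t : ℕ} {j i : Fin n} (hw : HasWalk E (t + 1) j i) :
    ∃ m, HasWalk E t j m ∧ E m i := by
  obtain ⟨p, hp0, hpt, hpe⟩ := hw
  exact ⟨p t, ⟨p, hp0, rfl, fun l hl => hpe l (by omega)⟩, hpt ▸ hpe t t.lt_succ_self⟩

end HasWalk

section Distance

variable {n : ℕ} {E : Fin n → Fin n → Prop} {x : Fin n → ℕ → ℝ} {i j : Fin n}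

theorem distToInfected_le {t : ℕ} (hj : 0 < x j 0) (hw : HasWalk E t j i) :
    distToInfected E x i ≤ t :=
  sInf_le ⟨t, rfl, j, hj, hw⟩

theorem exists_hasWalk_of_distToInfected_ne_top (hdi : distToInfected E x i ≠ ⊤) :
    ∃ t : ℕ, distToInfected E x i = t ∧ ∃ j, 0 < x j 0 ∧ HasWalk E t j i := by
  have hne : {t : ℕ∞ | ∃ t' : ℕ, (t' : ℕ∞) = t ∧ ∃ j, 0 < x j 0 ∧ HasWalk E t' j i}.Nonempty :=
    Set.nonempty_iff_ne_empty.2 fun hempty => hdi (by rw [distToInfected, hempty, sInf_empty])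
  obtain ⟨t, ht, hwalk⟩ := csInf_mem hne
  exact ⟨t, ht.symm, hwalk⟩

theorem distToInfected_le_add_one_of_edge (he : E j i) :
    distToInfected E x i ≤ distToInfected E x j + 1 := by
  by_cases hdj : distToInfected E x j = ⊤
  · simp [hdj]
  obtain ⟨t, ht, j₀, hj₀, hw⟩ := exists_hasWalk_of_distToInfected_ne_top hdj
  rw [ht]
  exact_mod_cast distToInfected_le hj₀ (hw.snoc he)

end Distance

namespace SIR

variable {n : ℕ} {E : Fin n → Fin n → Prop} {a : Fin n → Fin n → ℝ} {h β δ : ℝ}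
  {s x r : Fin n → ℕ → ℝ}

theorem mass_eq_initial
    (hdynS : ∀ i k, s i (k + 1) = s i k - h * s i k * β * ∑ j, a i j * x j k)
    (hdynX : ∀ i k, x i (k + 1) = (1 - h * δ) * x i k + h * s i k * β * ∑ j, a i j * x j k)
    (hdynR : ∀ i k, r i (k + 1) = r i k + h * δ * x i k) (i : Fin n) (k : ℕ) :
    s i k + x i k + r i k = s i 0 + x i 0 + r i 0 := by
  induction k with
  | zero => rfl
  | succ k ih => rw [hdynS, hdynX, hdynR, ← ih]; ring

theorem r_eq_initial_add_sum (hdynR : ∀ i k, r i (k + 1) = r i k + h * δ * x i k)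
    (i : Fin n) (k : ℕ) : r i k = r i 0 + ∑ m ∈ range k, h * δ * x i m := by
  induction k with
  | zero => simp
  | succ k ih => rw [hdynR, ih, sum_range_succ, add_assoc]

theorem r_eq_zero_of_forall_lt (hdynR : ∀ i k, r i (k + 1) = r i k + h * δ * x i k)
    {i : Fin n} {k : ℕ} (hr0 : r i 0 = 0) (hx : ∀ m < k, x i m = 0) : r i k = 0 := by
  rw [r_eq_initial_add_sum hdynR, hr0, zero_add]
  exact sum_eq_zero fun m hm => by rw [hx m (mem_range.1 hm), mul_zero]

theorem r_pos_of_x_pos (hdynR : ∀ i k, r i (k + 1) = r i k + h * δ * x i k)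
    (hh : 0 < h) (hδ : 0 < δ) {i : Fin n} {t k : ℕ} (hr0 : 0 ≤ r i 0)
    (hx : ∀ m, 0 ≤ x i m) (hxt : 0 < x i t) (htk : t < k) : 0 < r i k := by
  rw [r_eq_initial_add_sum hdynR]
  have hsum : 0 < ∑ m ∈ range k, h * δ * x i m :=
    sum_pos' (fun m _ => by have := hx m; positivity) ⟨t, mem_range.2 htk, by positivity⟩
  linarith

theorem infection_pressure_lt_one {i : Fin n} {y : Fin n → ℝ} (ha : ∀ j, 0 ≤ a i j)
    (hRow : h * β * ∑ j, a i j < 1) (hh : 0 < h) (hβ : 0 < β)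
    (hy : ∀ j, 0 ≤ y j ∧ y j ≤ 1) : h * β * ∑ j, a i j * y j < 1 :=
  calc h * β * ∑ j, a i j * y j ≤ h * β * ∑ j, a i j := by
        gcongr with j
        exact mul_le_of_le_one_right (ha j) (hy j).2
    _ < 1 := hRow

theorem s_pos_and_x_nonneg_and_r_nonneg
    (hdynS : ∀ i k, s i (k + 1) = s i k - h * s i k * β * ∑ j, a i j * x j k)
    (hdynX : ∀ i k, x i (k + 1) = (1 - h * δ) * x i k + h * s i k * β * ∑ j, a i j * x j k)
    (hdynR : ∀ i k, r i (k + 1) = r i k + h * δ * x i k)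
    (hmass : ∀ i k, s i k + x i k + r i k = 1)
    (hs0 : ∀ i, 0 < s i 0) (hx0 : ∀ i, 0 ≤ x i 0) (hr0 : ∀ i, 0 ≤ r i 0)
    (hh : 0 < h) (hβ : 0 < β) (hδ : 0 < δ) (hhδ : h * δ < 1)
    (haNonneg : ∀ i j, 0 ≤ a i j) (hRow : ∀ i, h * β * ∑ j, a i j < 1) (k : ℕ) :
    ∀ i, 0 < s i k ∧ 0 ≤ x i k ∧ 0 ≤ r i k := by
  induction k with
  | zero => exact fun i => ⟨hs0 i, hx0 i, hr0 i⟩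
  | succ k ih =>
    intro i
    obtain ⟨hs, hx, hr⟩ := ih i
    have hxk : ∀ j, 0 ≤ x j k ∧ x j k ≤ 1 := fun j => by
      obtain ⟨hsj, hxj, hrj⟩ := ih j
      exact ⟨hxj, by linarith [hmass j k]⟩
    have hpressure_nonneg : 0 ≤ ∑ j, a i j * x j k :=
      sum_nonneg fun j _ => mul_nonneg (haNonneg i j) (hxk j).1
    have hpressure_lt := infection_pressure_lt_one (haNonneg i) (hRow i) hh hβ hxk
    refine ⟨?_, ?_, ?_⟩
    · rw [hdynS, show ∀ u v : ℝ, u - h * u * β * v = u * (1 - h * β * v) by intros; ring]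
      exact mul_pos hs (by linarith)
    · rw [hdynX]
      have : 0 ≤ 1 - h * δ := by linarith
      positivity
    · rw [hdynR]
      positivity

theorem x_succ_pos_of_edge
    (hdynX : ∀ i k, x i (k + 1) = (1 - h * δ) * x i k + h * s i k * β * ∑ j, a i j * x j k)
    (hhδ : h * δ < 1) (haE : ∀ i j, E j i → 0 < a i j) (haNonneg : ∀ i j, 0 ≤ a i j)
    (hh : 0 < h) (hβ : 0 < β) {i j : Fin n} {k : ℕ} (hs : 0 < s i k)
    (hx : ∀ l, 0 ≤ x l k) (he : E j i) (hxj : 0 < x j k) : 0 < x i (k + 1) := by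
  have hpressure : 0 < ∑ l, a i l * x l k :=
    (mul_pos (haE i j he) hxj).trans_le <|
      single_le_sum (f := fun l => a i l * x l k)
        (fun l _ => mul_nonneg (haNonneg i l) (hx l)) (mem_univ j)
  have : 0 ≤ (1 - h * δ) * x i k := mul_nonneg (by linarith) (hx i)
  rw [hdynX]
  linarith [mul_pos (mul_pos (mul_pos hh hs) hβ) hpressure]

theorem exists_edge_x_pos_of_x_succ_pos
    (hdynX : ∀ i k, x i (k + 1) = (1 - h * δ) * x i k + h * s i k * β * ∑ j, a i j * x j k)
    (haZero : ∀ i j, ¬ E j i → j ≠ i → a i j = 0) {i : Fin n} {k : ℕ}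
    (hx : ∀ l, 0 ≤ x l k) (hxi : x i k = 0) (hsucc : 0 < x i (k + 1)) :
    ∃ j, E j i ∧ 0 < x j k := by
  by_contra! hnone
  have hterm : ∀ j, a i j * x j k = 0 := fun j => by
    by_cases he : E j i
    · rw [le_antisymm (hnone j he) (hx j), mul_zero]
    · by_cases hji : j = i
      · rw [hji, hxi, mul_zero]
      · rw [haZero i j he hji, zero_mul]
  simp [hdynX, hxi, hterm] at hsucc

theorem x_pos_of_hasWalk
    (hdynX : ∀ i k, x i (k + 1) = (1 - h * δ) * x i k + h * s i k * β * ∑ j, a i j * x j k)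
    (hhδ : h * δ < 1) (haE : ∀ i j, E j i → 0 < a i j) (haNonneg : ∀ i j, 0 ≤ a i j)
    (hh : 0 < h) (hβ : 0 < β) (hs : ∀ i k, 0 < s i k) (hx : ∀ i k, 0 ≤ x i k)
    {j : Fin n} (hj : 0 < x j 0) (t : ℕ) {i : Fin n} (hw : HasWalk E t j i) : 0 < x i t := by
  induction t generalizing i with
  | zero => exact hw.eq_of_zero ▸ hj
  | succ t ih =>
    obtain ⟨m, hwm, he⟩ := hw.exists_snoc
    exact x_succ_pos_of_edge hdynX hhδ haE haNonneg hh hβ (hs i t) (hx · t) he (ih hwm)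

theorem distToInfected_le_of_x_pos
    (hdynX : ∀ i k, x i (k + 1) = (1 - h * δ) * x i k + h * s i k * β * ∑ j, a i j * x j k)
    (haZero : ∀ i j, ¬ E j i → j ≠ i → a i j = 0) (hx : ∀ i k, 0 ≤ x i k)
    (k : ℕ) {i : Fin n} (hxi : 0 < x i k) : distToInfected E x i ≤ k := by
  induction k generalizing i with
  | zero => exact distToInfected_le hxi (HasWalk.refl i)
  | succ k ih =>
    rcases (hx i k).lt_or_eq with hxk | hxk
    · exact (ih hxk).trans (by exact_mod_cast k.le_succ)
    · obtain ⟨j, he, hxj⟩ := exists_edge_x_pos_of_x_succ_pos hdynX haZero (hx · k) hxk.symm hxi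
      calc distToInfected E x i ≤ distToInfected E x j + 1 :=
            distToInfected_le_add_one_of_edge he
        _ ≤ k + 1 := by gcongr; exact ih hxj
        _ = (k + 1 : ℕ) := by norm_cast

end SIR

/-- Lemma 1(c): Under Assumptions 1 and 2, if `d_i ≠ +∞`, then
`r_i[k] = 0` for all `k ≤ d_i` and `r_i[k] ∈ (0,1)` for all `k > d_i`. -/
theorem sir_recovered_zero_before_dist_pos_after
    {n : ℕ} (E : Fin n → Fin n → Prop) (a : Fin n → Fin n → ℝ)
    (h β δ : ℝ) (s x r : Fin n → ℕ → ℝ)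
    -- SIR dynamics
    (hdynS : ∀ i k, s i (k + 1) = s i k - h * s i k * β * ∑ j, a i j * x j k)
    (hdynX : ∀ i k, x i (k + 1) = (1 - h * δ) * x i k + h * s i k * β * ∑ j, a i j * x j k)
    (hdynR : ∀ i k, r i (k + 1) = r i k + h * δ * x i k)
    -- Assumption 1 (initial conditions)
    (hs0 : ∀ i, 0 < s i 0 ∧ s i 0 ≤ 1)
    (hx0 : ∀ i, 0 ≤ x i 0 ∧ x i 0 < 1)
    (hr0 : ∀ i, r i 0 = 0)
    (hsum0 : ∀ i, s i 0 + x i 0 = 1)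
    -- Assumption 2 (model parameters)
    (hh : 0 < h) (hβ : 0 < β) (hδ : 0 < δ) (hhδ : h * δ < 1)
    (haE : ∀ i j, E j i → 0 < a i j)
    (haNonneg : ∀ i j, 0 ≤ a i j)
    (haZero : ∀ i j, ¬ E j i → j ≠ i → a i j = 0)
    (hRow : ∀ i, h * β * ∑ j, a i j < 1)
    (i : Fin n) (hdi : distToInfected E x i ≠ ⊤) :
    (∀ k : ℕ, (k : ℕ∞) ≤ distToInfected E x i → r i k = 0) ∧
      (∀ k : ℕ, distToInfected E x i < (k : ℕ∞) → r i k ∈ Set.Ioo (0 : ℝ) 1) := by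
  obtain ⟨t, hd, j, hj, hw⟩ := exists_hasWalk_of_distToInfected_ne_top hdi
  have hmass : ∀ i k, s i k + x i k + r i k = 1 := fun i k => by
    rw [SIR.mass_eq_initial hdynS hdynX hdynR, hr0, add_zero, hsum0]
  have hbounds := SIR.s_pos_and_x_nonneg_and_r_nonneg hdynS hdynX hdynR hmass
    (fun i => (hs0 i).1) (fun i => (hx0 i).1) (fun i => (hr0 i).ge) hh hβ hδ hhδ haNonneg hRow
  have hs : ∀ i k, 0 < s i k := fun i k => (hbounds k i).1
  have hx : ∀ i k, 0 ≤ x i k := fun i k => (hbounds k i).2.1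
  have hxt : 0 < x i t :=
    SIR.x_pos_of_hasWalk hdynX hhδ haE haNonneg hh hβ hs hx hj t hw
  have hx_before : ∀ m < t, x i m = 0 := fun m hm => by
    by_contra hne
    have := SIR.distToInfected_le_of_x_pos hdynX haZero hx m ((hx i m).lt_of_ne' hne)
    rw [hd, Nat.cast_le] at this
    omega
  rw [hd]
  refine ⟨fun k hk => ?_, fun k hk => ⟨?_, ?_⟩⟩
  · exact SIR.r_eq_zero_of_forall_lt hdynR (hr0 i)
      fun m hm => hx_before m (hm.trans_le (by exact_mod_cast hk))
  · exact SIR.r_pos_of_x_pos hdynR hh hδ (hr0 i).ge (hx i) hxt (by exact_mod_cast hk)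
  · linarith [hmass i k, hs i k, hx i k]
end

section
/- Consider the discrete-time networked SIR model under Assumptions 1 and 2. Let i ∈ V and k ∈ ℤ≥0 be such that x_i[k] = 0, and let N_i = {j : (j,i) ∈ E}. If there exists j ∈ N_i with x_j[k] > 0, then x_i[k+1] > 0. If x_j[k] = 0 for all j ∈ N_i, then x_i[k+1] = 0. -/
/-!
The susceptible fraction stays positive and every state stays in the simplex `s + x ≤ 1`:
one step multiplies `s` by `1 - p` with `p = hβ ∑ⱼ aᵢⱼ xⱼ < 1` and moves mass `s p` from `s` to `x`.
Hence, when `xᵢ[k] = 0`, the update reduces to `xᵢ[k+1] = h sᵢ[k] β ∑ⱼ aᵢⱼ xⱼ[k]`, which is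
positive exactly when some in-neighbour is infected; `aᵢᵢ xᵢ[k] = 0` and non-edges carry weight `0`.
-/

open Finset

theorem sir_step_bounds {s x p d : ℝ} (hs : 0 < s) (hx : 0 ≤ x) (hsx : s + x ≤ 1)
    (hp₀ : 0 ≤ p) (hp₁ : p < 1) (hd₀ : 0 ≤ d) (hd₁ : d ≤ 1) :
    0 < s - s * p ∧ 0 ≤ (1 - d) * x + s * p ∧ s - s * p + ((1 - d) * x + s * p) ≤ 1 := by
  refine ⟨?_, ?_, ?_⟩
  · nlinarith
  · have := mul_nonneg (sub_nonneg.2 hd₁) hx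
    positivity
  · nlinarith [mul_nonneg hd₀ hx]

theorem sum_mul_le_sum_of_le_one {ι : Type*} (t : Finset ι) {w v : ι → ℝ}
    (hw : ∀ j ∈ t, 0 ≤ w j) (hv : ∀ j ∈ t, v j ≤ 1) :
    ∑ j ∈ t, w j * v j ≤ ∑ j ∈ t, w j :=
  sum_le_sum fun j hj => mul_le_of_le_one_right (hw j hj) (hv j hj)

section Dynamics

variable {ι : Type*} [Fintype ι] {a : ι → ι → ℝ} {h β δ : ℝ} {s x : ι → ℕ → ℝ}

theorem sir_state_bounds
    (hdynS : ∀ i k, s i (k + 1) = s i k - h * s i k * β * ∑ j, a i j * x j k)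
    (hdynX : ∀ i k, x i (k + 1) = (1 - h * δ) * x i k + h * s i k * β * ∑ j, a i j * x j k)
    (hs0 : ∀ i, 0 < s i 0) (hx0 : ∀ i, 0 ≤ x i 0) (hsum0 : ∀ i, s i 0 + x i 0 ≤ 1)
    (hhβ : 0 ≤ h * β) (hhδ₀ : 0 ≤ h * δ) (hhδ₁ : h * δ ≤ 1)
    (ha : ∀ i j, 0 ≤ a i j) (hRow : ∀ i, h * β * ∑ j, a i j < 1) (k : ℕ) (i : ι) :
    0 < s i k ∧ 0 ≤ x i k ∧ s i k + x i k ≤ 1 := by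
  induction k generalizing i with
  | zero => exact ⟨hs0 i, hx0 i, hsum0 i⟩
  | succ k ih =>
    have hS₀ : 0 ≤ ∑ j, a i j * x j k :=
      sum_nonneg fun j _ => mul_nonneg (ha i j) (ih j).2.1
    have hS₁ : ∑ j, a i j * x j k ≤ ∑ j, a i j :=
      sum_mul_le_sum_of_le_one _ (fun j _ => ha i j) fun j _ => by linarith [ih j]
    have hp₁ : h * β * ∑ j, a i j * x j k < 1 :=
      (mul_le_mul_of_nonneg_left hS₁ hhβ).trans_lt (hRow i)
    have hS : h * s i k * β * ∑ j, a i j * x j k = s i k * (h * β * ∑ j, a i j * x j k) := by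
      ring
    rw [hdynS, hdynX, hS]
    obtain ⟨hs, hx, hsx⟩ := ih i
    exact sir_step_bounds hs hx hsx (mul_nonneg hhβ hS₀) hp₁ hhδ₀ hhδ₁

end Dynamics

theorem sir_zero_infection_next_step_general
    {n : ℕ} (E : Fin n → Fin n → Prop) (a : Fin n → Fin n → ℝ)
    (h β δ : ℝ) (s x : Fin n → ℕ → ℝ)
    -- SIR dynamics
    (hdynS : ∀ i k, s i (k + 1) = s i k - h * s i k * β * ∑ j, a i j * x j k)
    (hdynX : ∀ i k, x i (k + 1) = (1 - h * δ) * x i k + h * s i k * β * ∑ j, a i j * x j k)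
    -- Assumption 1 (initial conditions)
    (hs0 : ∀ i, 0 < s i 0 ∧ s i 0 ≤ 1)
    (hx0 : ∀ i, 0 ≤ x i 0 ∧ x i 0 < 1)
    (hsum0 : ∀ i, s i 0 + x i 0 = 1)
    -- Assumption 2 (model parameters)
    (hh : 0 < h) (hβ : 0 < β) (hδ : 0 < δ) (hhδ : h * δ < 1)
    (haE : ∀ i j, E j i → 0 < a i j)
    (haNonneg : ∀ i j, 0 ≤ a i j)
    (haZero : ∀ i j, ¬ E j i → j ≠ i → a i j = 0)
    (hRow : ∀ i, h * β * ∑ j, a i j < 1) :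
    ∀ (i : Fin n) (k : ℕ), x i k = 0 →
      ((∃ j, E j i ∧ 0 < x j k) → 0 < x i (k + 1)) ∧
        ((∀ j, E j i → x j k = 0) → x i (k + 1) = 0) := by
  intro i k hxi
  have hbounds := sir_state_bounds hdynS hdynX (fun i => (hs0 i).1) (fun i => (hx0 i).1)
    (fun i => (hsum0 i).le) (mul_pos hh hβ).le (mul_pos hh hδ).le hhδ.le haNonneg hRow k
  have hstep : x i (k + 1) = h * s i k * β * ∑ j, a i j * x j k := by
    rw [hdynX, hxi, mul_zero, zero_add]
  rw [hstep]
  constructor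
  · rintro ⟨j, hji, hxj⟩
    have hS : 0 < ∑ j, a i j * x j k :=
      sum_pos' (fun j _ => mul_nonneg (haNonneg i j) (hbounds j).2.1)
        ⟨j, mem_univ j, mul_pos (haE i j hji) hxj⟩
    have := (hbounds i).1
    positivity
  · intro hnbrs
    have hS : ∑ j, a i j * x j k = 0 := by
      refine sum_eq_zero fun j _ => ?_
      by_cases hji : E j i
      · rw [hnbrs j hji, mul_zero]
      by_cases hj : j = i
      · rw [hj, hxi, mul_zero]
      rw [haZero i j hji hj, zero_mul]
    rw [hS, mul_zero]

/-- Fact 2: Under Assumptions 1 and 2, suppose `x_i[k] = 0`.  If some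
in-neighbor `j ∈ N_i = {j : (j,i) ∈ E}` has `x_j[k] > 0` then `x_i[k+1] > 0`; if
`x_j[k] = 0` for all `j ∈ N_i` then `x_i[k+1] = 0`. -/
theorem sir_zero_infection_next_step
    {n : ℕ} (E : Fin n → Fin n → Prop) (a : Fin n → Fin n → ℝ)
    (h β δ : ℝ) (s x r : Fin n → ℕ → ℝ)
    -- SIR dynamics
    (hdynS : ∀ i k, s i (k + 1) = s i k - h * s i k * β * ∑ j, a i j * x j k)
    (hdynX : ∀ i k, x i (k + 1) = (1 - h * δ) * x i k + h * s i k * β * ∑ j, a i j * x j k)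
    (hdynR : ∀ i k, r i (k + 1) = r i k + h * δ * x i k)
    -- Assumption 1 (initial conditions)
    (hs0 : ∀ i, 0 < s i 0 ∧ s i 0 ≤ 1)
    (hx0 : ∀ i, 0 ≤ x i 0 ∧ x i 0 < 1)
    (hr0 : ∀ i, r i 0 = 0)
    (hsum0 : ∀ i, s i 0 + x i 0 = 1)
    -- Assumption 2 (model parameters)
    (hh : 0 < h) (hβ : 0 < β) (hδ : 0 < δ) (hhδ : h * δ < 1)
    (haE : ∀ i j, E j i → 0 < a i j)
    (haNonneg : ∀ i j, 0 ≤ a i j)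
    (haZero : ∀ i j, ¬ E j i → j ≠ i → a i j = 0)
    (hRow : ∀ i, h * β * ∑ j, a i j < 1) :
    ∀ (i : Fin n) (k : ℕ), x i k = 0 →
      ((∃ j, E j i ∧ 0 < x j k) → 0 < x i (k + 1)) ∧
        ((∀ j, E j i → x j k = 0) → x i (k + 1) = 0) :=
  sir_zero_infection_next_step_general E a h β δ s x hdynS hdynX hs0 hx0 hsum0 hh hβ hδ hhδ haE
    haNonneg haZero hRow
end

section
/- Consider the discrete-time networked SIR model under Assumptions 1 and 2. Let S_I' = {i ∈ S_I : a_{ii} > 0}. Then for any node i₁ ∈ S_I' and any node i₂ ∈ V with d_{i₂} ≠ +∞, and for all time steps k₁ ≥ 0 and k₂ ≥ d_{i₂}, the 2×2 matrix whose first row is Φ^x_{k₁,i₁} = [ s_{i₁}[k₁] ∑_{j∈N̄_{i₁}} a_{i₁ j} x_j[k₁], −x_{i₁}[k₁] ] and whose second row is Φ^r_{k₂,i₂} = [ 0, x_{i₂}[k₂] ] has rank 2. -/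
/-!
The quantities `s > 0`, `x ≥ 0` and `s + x ≤ 1` are invariant under the dynamics, so every
node's infection pressure `∑ j, a i j * x j k` stays nonnegative and below `1 / (h β)`.
Hence an infected node stays infected (as `h δ < 1`) and infects each out-neighbour in one step
(as `h β a i j > 0` and `s > 0`), so `x_{i₂}[k] > 0` once `k ≥ d_{i₂}`. The self-loop at `i₁`
makes the pressure at `i₁` positive, so the matrix is upper triangular with nonzero diagonal.
-/

open Finset

theorem Matrix.rank_upperTriangular_fin_two {K : Type*} [Field K] {p r : K} (q : K)
    (hp : p ≠ 0) (hr : r ≠ 0) : (!![p, q; 0, r] : Matrix (Fin 2) (Fin 2) K).rank = 2 := by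
  have hdet : IsUnit (!![p, q; 0, r] : Matrix (Fin 2) (Fin 2) K).det := by
    rw [Matrix.det_fin_two_of]
    simpa using mul_ne_zero hp hr
  simpa using Matrix.rank_of_isUnit _ ((Matrix.isUnit_iff_isUnit_det _).mpr hdet)

theorem mul_sum_mul_lt_one_of_le_one {ι : Type*} [Fintype ι] {c : ℝ} {w y : ι → ℝ}
    (hc : 0 ≤ c) (hw : ∀ j, 0 ≤ w j) (hy : ∀ j, y j ≤ 1) (hrow : c * ∑ j, w j < 1) :
    c * ∑ j, w j * y j < 1 :=
  calc c * ∑ j, w j * y j ≤ c * ∑ j, w j :=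
        mul_le_mul_of_nonneg_left
          (sum_le_sum fun j _ => mul_le_of_le_one_right (hw j) (hy j)) hc
    _ < 1 := hrow

section Dynamics

variable {ι : Type*} [Fintype ι] {a : ι → ι → ℝ} {h β δ : ℝ} {s x : ι → ℕ → ℝ}

theorem sir_state_succ
    (hdynS : ∀ i k, s i (k + 1) = s i k - h * s i k * β * ∑ j, a i j * x j k)
    (hdynX : ∀ i k, x i (k + 1) = (1 - h * δ) * x i k + h * s i k * β * ∑ j, a i j * x j k)
    (ha : ∀ i j, 0 ≤ a i j) (hRow : ∀ i, h * β * ∑ j, a i j < 1)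
    (hhβ : 0 ≤ h * β) (hhδ₀ : 0 ≤ h * δ) (hhδ₁ : h * δ ≤ 1) {k : ℕ}
    (hk : ∀ i, 0 < s i k ∧ 0 ≤ x i k ∧ s i k + x i k ≤ 1) (i : ι) :
    0 < s i (k + 1) ∧ 0 ≤ x i (k + 1) ∧ s i (k + 1) + x i (k + 1) ≤ 1 := by
  obtain ⟨hs, hx, hsx⟩ := hk i
  set p := ∑ j, a i j * x j k
  have hp : 0 ≤ p := sum_nonneg fun j _ => mul_nonneg (ha i j) (hk j).2.1
  have hp₁ : h * β * p < 1 :=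
    mul_sum_mul_lt_one_of_le_one hhβ (ha i) (fun j => by linarith [hk j]) (hRow i)
  have hnew : h * s i k * β * p = s i k * (h * β * p) := by ring
  have hnew₀ : 0 ≤ h * s i k * β * p := hnew ▸ mul_nonneg hs.le (mul_nonneg hhβ hp)
  refine ⟨?_, ?_, ?_⟩
  · rw [hdynS, hnew, ← mul_one_sub]
    exact mul_pos hs (sub_pos.mpr hp₁)
  · rw [hdynX]
    exact add_nonneg (mul_nonneg (sub_nonneg.mpr hhδ₁) hx) hnew₀
  · rw [hdynS, hdynX]
    nlinarith [mul_nonneg hhδ₀ hx]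

theorem sir_state
    (hdynS : ∀ i k, s i (k + 1) = s i k - h * s i k * β * ∑ j, a i j * x j k)
    (hdynX : ∀ i k, x i (k + 1) = (1 - h * δ) * x i k + h * s i k * β * ∑ j, a i j * x j k)
    (ha : ∀ i j, 0 ≤ a i j) (hRow : ∀ i, h * β * ∑ j, a i j < 1)
    (hhβ : 0 ≤ h * β) (hhδ₀ : 0 ≤ h * δ) (hhδ₁ : h * δ ≤ 1)
    (h0 : ∀ i, 0 < s i 0 ∧ 0 ≤ x i 0 ∧ s i 0 + x i 0 ≤ 1) (k : ℕ) (i : ι) :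
    0 < s i k ∧ 0 ≤ x i k ∧ s i k + x i k ≤ 1 := by
  induction k generalizing i with
  | zero => exact h0 i
  | succ k ih => exact sir_state_succ hdynS hdynX ha hRow hhβ hhδ₀ hhδ₁ ih i

theorem sir_x_succ_pos_of_pos
    (hdynX : ∀ i k, x i (k + 1) = (1 - h * δ) * x i k + h * s i k * β * ∑ j, a i j * x j k)
    (ha : ∀ i j, 0 ≤ a i j) (hhβ : 0 ≤ h * β) (hhδ : h * δ < 1) {i : ι} {k : ℕ}
    (hs : 0 ≤ s i k) (hxk : ∀ j, 0 ≤ x j k) (hx : 0 < x i k) : 0 < x i (k + 1) := by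
  have hnew : h * s i k * β * ∑ j, a i j * x j k = s i k * (h * β * ∑ j, a i j * x j k) := by
    ring
  rw [hdynX, hnew]
  exact add_pos_of_pos_of_nonneg (mul_pos (sub_pos.mpr hhδ) hx)
    (mul_nonneg hs (mul_nonneg hhβ (sum_nonneg fun j _ => mul_nonneg (ha i j) (hxk j))))

theorem sir_x_succ_pos_of_neighbor
    (hdynX : ∀ i k, x i (k + 1) = (1 - h * δ) * x i k + h * s i k * β * ∑ j, a i j * x j k)
    (ha : ∀ i j, 0 ≤ a i j) (hhβ : 0 < h * β) (hhδ : h * δ ≤ 1) {i j : ι} {k : ℕ}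
    (hs : 0 < s i k) (hxk : ∀ l, 0 ≤ x l k) (hij : 0 < a i j) (hx : 0 < x j k) :
    0 < x i (k + 1) := by
  have hnew : h * s i k * β * ∑ j, a i j * x j k = s i k * (h * β * ∑ j, a i j * x j k) := by
    ring
  have hp : 0 < ∑ l, a i l * x l k :=
    sum_pos' (fun l _ => mul_nonneg (ha i l) (hxk l)) ⟨j, mem_univ j, mul_pos hij hx⟩
  rw [hdynX, hnew]
  exact add_pos_of_nonneg_of_pos (mul_nonneg (sub_nonneg.mpr hhδ) (hxk i))
    (mul_pos hs (mul_pos hhβ hp))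

end Dynamics

theorem HasWalk.propagate {n : ℕ} {E : Fin n → Fin n → Prop} {P : Fin n → ℕ → Prop}
    (hspread : ∀ j i k, E j i → P j k → P i (k + 1)) {t : ℕ} {j i : Fin n}
    (hw : HasWalk E t j i) (hj : P j 0) : P i t := by
  induction t generalizing i with
  | zero =>
    obtain ⟨p, hp0, hpt, -⟩ := hw
    exact hpt ▸ hp0 ▸ hj
  | succ t ih =>
    obtain ⟨p, hp0, hpt, hedge⟩ := hw
    exact hpt ▸ hspread _ _ _ (hedge t t.lt_succ_self)
      (ih ⟨p, hp0, rfl, fun l hl => hedge l (Nat.lt_succ_of_lt hl)⟩)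

theorem exists_hasWalk_of_distToInfected_le {n : ℕ} {E : Fin n → Fin n → Prop}
    {x : Fin n → ℕ → ℝ} {i : Fin n} {k : ℕ} (hk : distToInfected E x i ≤ k) :
    ∃ t ≤ k, ∃ j, 0 < x j 0 ∧ HasWalk E t j i := by
  have hlt : distToInfected E x i < (k + 1 : ℕ) :=
    hk.trans_lt (by exact_mod_cast k.lt_succ_self)
  obtain ⟨-, ⟨t, rfl, j, hj, hw⟩, ht⟩ := sInf_lt_iff.mp hlt
  exact ⟨t, Nat.lt_succ_iff.mp (by exact_mod_cast ht), j, hj, hw⟩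

theorem sir_coefficient_matrix_rank_two_of_infected_selfloop_general
    {n : ℕ} (E : Fin n → Fin n → Prop) (a : Fin n → Fin n → ℝ)
    (h β δ : ℝ) (s x : Fin n → ℕ → ℝ)
    -- SIR dynamics
    (hdynS : ∀ i k, s i (k + 1) = s i k - h * s i k * β * ∑ j, a i j * x j k)
    (hdynX : ∀ i k, x i (k + 1) = (1 - h * δ) * x i k + h * s i k * β * ∑ j, a i j * x j k)
    -- Assumption 1 (initial conditions)
    (hs0 : ∀ i, 0 < s i 0 ∧ s i 0 ≤ 1)
    (hx0 : ∀ i, 0 ≤ x i 0 ∧ x i 0 < 1)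
    (hsum0 : ∀ i, s i 0 + x i 0 = 1)
    -- Assumption 2 (model parameters)
    (hh : 0 < h) (hβ : 0 < β) (hδ : 0 < δ) (hhδ : h * δ < 1)
    (haE : ∀ i j, E j i → 0 < a i j)
    (haNonneg : ∀ i j, 0 ≤ a i j)
    (hRow : ∀ i, h * β * ∑ j, a i j < 1)
    (i₁ i₂ : Fin n) (hi₁ : 0 < x i₁ 0) (hii : 0 < a i₁ i₁)
    (k₁ k₂ : ℕ) (hk₂ : distToInfected E x i₂ ≤ (k₂ : ℕ∞)) :
    (!![s i₁ k₁ * ∑ j, a i₁ j * x j k₁, -(x i₁ k₁); 0, x i₂ k₂] :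
      Matrix (Fin 2) (Fin 2) ℝ).rank = 2 := by
  have hhβ : 0 < h * β := mul_pos hh hβ
  have hstate := sir_state hdynS hdynX haNonneg hRow hhβ.le (mul_pos hh hδ).le hhδ.le
    fun i => ⟨(hs0 i).1, (hx0 i).1, (hsum0 i).le⟩
  have hpersist : ∀ i t k, t ≤ k → 0 < x i t → 0 < x i k := fun i t k htk hx =>
    Nat.le_induction hx (fun k _ => sir_x_succ_pos_of_pos hdynX haNonneg hhβ.le hhδ
      (hstate k i).1.le fun j => (hstate k j).2.1) k htk
  have hx₁ : 0 < x i₁ k₁ := hpersist i₁ 0 k₁ k₁.zero_le hi₁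
  obtain ⟨t, htk, j, hj, hw⟩ := exists_hasWalk_of_distToInfected_le hk₂
  have hx₂ : 0 < x i₂ k₂ := hpersist i₂ t k₂ htk <| hw.propagate (fun j i k hE hx =>
    sir_x_succ_pos_of_neighbor hdynX haNonneg hhβ hhδ.le (hstate k i).1
      (fun l => (hstate k l).2.1) (haE i j hE) hx) hj
  have hp₁ : 0 < ∑ j, a i₁ j * x j k₁ :=
    sum_pos' (fun j _ => mul_nonneg (haNonneg i₁ j) (hstate k₁ j).2.1)
      ⟨i₁, mem_univ _, mul_pos hii hx₁⟩
  exact Matrix.rank_upperTriangular_fin_two _ (mul_pos (hstate k₁ i₁).1 hp₁).ne' hx₂.ne'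

/-- Lemma 2(a): Under Assumptions 1 and 2, for any `i₁ ∈ S_I' =
{i ∈ S_I : a_{ii} > 0}` and any `i₂ ∈ V` with `d_{i₂} ≠ +∞`, and for all `k₁ ≥ 0`
and `k₂ ≥ d_{i₂}`, the `2 × 2` matrix with rows
`Φ^x_{k₁,i₁} = [s_{i₁}[k₁] ∑_{j∈N̄_{i₁}} a_{i₁j} x_j[k₁], −x_{i₁}[k₁]]` and
`Φ^r_{k₂,i₂} = [0, x_{i₂}[k₂]]` has rank `2`. -/
theorem sir_coefficient_matrix_rank_two_of_infected_selfloop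
    {n : ℕ} (E : Fin n → Fin n → Prop) (a : Fin n → Fin n → ℝ)
    (h β δ : ℝ) (s x r : Fin n → ℕ → ℝ)
    -- SIR dynamics
    (hdynS : ∀ i k, s i (k + 1) = s i k - h * s i k * β * ∑ j, a i j * x j k)
    (hdynX : ∀ i k, x i (k + 1) = (1 - h * δ) * x i k + h * s i k * β * ∑ j, a i j * x j k)
    (hdynR : ∀ i k, r i (k + 1) = r i k + h * δ * x i k)
    -- Assumption 1 (initial conditions)
    (hs0 : ∀ i, 0 < s i 0 ∧ s i 0 ≤ 1)
    (hx0 : ∀ i, 0 ≤ x i 0 ∧ x i 0 < 1)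
    (hr0 : ∀ i, r i 0 = 0)
    (hsum0 : ∀ i, s i 0 + x i 0 = 1)
    -- Assumption 2 (model parameters)
    (hh : 0 < h) (hβ : 0 < β) (hδ : 0 < δ) (hhδ : h * δ < 1)
    (haE : ∀ i j, E j i → 0 < a i j)
    (haNonneg : ∀ i j, 0 ≤ a i j)
    (haZero : ∀ i j, ¬ E j i → j ≠ i → a i j = 0)
    (hRow : ∀ i, h * β * ∑ j, a i j < 1)
    (i₁ i₂ : Fin n) (hi₁ : 0 < x i₁ 0) (hii : 0 < a i₁ i₁)
    (hdi₂ : distToInfected E x i₂ ≠ ⊤)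
    (k₁ k₂ : ℕ) (hk₂ : distToInfected E x i₂ ≤ (k₂ : ℕ∞)) :
    (!![s i₁ k₁ * ∑ j, a i₁ j * x j k₁, -(x i₁ k₁); 0, x i₂ k₂] :
      Matrix (Fin 2) (Fin 2) ℝ).rank = 2 :=
  sir_coefficient_matrix_rank_two_of_infected_selfloop_general E a h β δ s x hdynS hdynX hs0 hx0
    hsum0 hh hβ hδ hhδ haE haNonneg hRow i₁ i₂ hi₁ hii k₁ k₂ hk₂
end

section
/- Consider the discrete-time networked SIR model under Assumptions 1 and 2. Let S_I' = {i ∈ S_I : a_{ii} > 0}, N_i = {j : (j,i) ∈ E}, and S' = {i ∈ V \ S_I' : N_i ≠ ∅ and min{d_j : j ∈ N_i} ≠ +∞}. Then for any node i₁ ∈ S' and any node i₂ ∈ V with d_{i₂} ≠ +∞, and for all time steps k₁ ≥ min{d_j : j ∈ N_{i₁}} and k₂ ≥ d_{i₂}, the 2×2 matrix whose first row is Φ^x_{k₁,i₁} = [ s_{i₁}[k₁] ∑_{j∈N̄_{i₁}} a_{i₁ j} x_j[k₁], −x_{i₁}[k₁] ] and whose second row is Φ^r_{k₂,i₂} = [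 0, x_{i₂}[k₂] ] has rank 2. -/
/-!
Under the assumptions `s` stays positive, `x` nonnegative and `s + x ≤ 1`, so every
infection pressure `∑ j, a i j * x j k` is nonnegative and `1 - h β ∑ j, a i j * x j k > 0`.
Consequently a positive `x` stays positive and spreads along every edge in one step, so
`x i k > 0` as soon as `d_i ≤ k`.  Both diagonal entries of the upper-triangular matrix are then
positive: `x i₂ k₂ > 0` since `d_{i₂} ≤ k₂`, and the infection pressure at `i₁` is positive
because some in-neighbour `j` of `i₁` has `d_j ≤ k₁`.
-/

open Finset

section Dynamics

variable {ι : Type*} [Fintype ι] {a : ι → ι → ℝ} {h β δ : ℝ} {s x : ι → ℕ → ℝ}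

theorem pressure_nonneg {k : ℕ} (ha : ∀ i j, 0 ≤ a i j) (hx : ∀ j, 0 ≤ x j k) (i : ι) :
    0 ≤ ∑ j, a i j * x j k :=
  sum_nonneg fun j _ => mul_nonneg (ha i j) (hx j)

theorem pressure_pos {i j : ι} {k : ℕ} (ha : ∀ i j, 0 ≤ a i j) (hx : ∀ j, 0 ≤ x j k)
    (haij : 0 < a i j) (hxj : 0 < x j k) : 0 < ∑ l, a i l * x l k :=
  sum_pos' (fun l _ => mul_nonneg (ha i l) (hx l)) ⟨j, mem_univ j, mul_pos haij hxj⟩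

theorem sir_invariant_succ
    (hdynS : ∀ i k, s i (k + 1) = s i k - h * s i k * β * ∑ j, a i j * x j k)
    (hdynX : ∀ i k, x i (k + 1) = (1 - h * δ) * x i k + h * s i k * β * ∑ j, a i j * x j k)
    (hh : 0 ≤ h) (hβ : 0 ≤ β) (hδ : 0 ≤ δ) (hhδ : h * δ ≤ 1)
    (ha : ∀ i j, 0 ≤ a i j) (hRow : ∀ i, h * β * ∑ j, a i j < 1)
    {k : ℕ} (hk : ∀ j, 0 < s j k ∧ 0 ≤ x j k ∧ s j k + x j k ≤ 1) (i : ι) :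
    0 < s i (k + 1) ∧ 0 ≤ x i (k + 1) ∧ s i (k + 1) + x i (k + 1) ≤ 1 := by
  obtain ⟨hs, hx, hsx⟩ := hk i
  have hP := pressure_nonneg ha (fun j => (hk j).2.1) i
  have hP_lt : h * β * ∑ j, a i j * x j k < 1 := by
    refine lt_of_le_of_lt (mul_le_mul_of_nonneg_left ?_ (by positivity)) (hRow i)
    refine sum_le_sum fun j _ => mul_le_of_le_one_right (ha i j) ?_
    linarith [(hk j).1, (hk j).2.2]
  refine ⟨?_, ?_, ?_⟩
  · calc 0 < s i k * (1 - h * β * ∑ j, a i j * x j k) := mul_pos hs (by linarith)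
      _ = s i (k + 1) := by rw [hdynS]; ring
  · rw [hdynX]
    have : 0 ≤ 1 - h * δ := by linarith
    positivity
  · have : 0 ≤ h * δ * x i k := by positivity
    linarith [hdynS i k, hdynX i k]

theorem sir_invariant
    (hdynS : ∀ i k, s i (k + 1) = s i k - h * s i k * β * ∑ j, a i j * x j k)
    (hdynX : ∀ i k, x i (k + 1) = (1 - h * δ) * x i k + h * s i k * β * ∑ j, a i j * x j k)
    (hs0 : ∀ i, 0 < s i 0) (hx0 : ∀ i, 0 ≤ x i 0) (hsum0 : ∀ i, s i 0 + x i 0 ≤ 1)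
    (hh : 0 ≤ h) (hβ : 0 ≤ β) (hδ : 0 ≤ δ) (hhδ : h * δ ≤ 1)
    (ha : ∀ i j, 0 ≤ a i j) (hRow : ∀ i, h * β * ∑ j, a i j < 1) (k : ℕ) (i : ι) :
    0 < s i k ∧ 0 ≤ x i k ∧ s i k + x i k ≤ 1 := by
  induction k generalizing i with
  | zero => exact ⟨hs0 i, hx0 i, hsum0 i⟩
  | succ k ih => exact sir_invariant_succ hdynS hdynX hh hβ hδ hhδ ha hRow ih i

theorem x_succ_pos_of_pos
    (hdynX : ∀ i k, x i (k + 1) = (1 - h * δ) * x i k + h * s i k * β * ∑ j, a i j * x j k)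
    (hh : 0 ≤ h) (hβ : 0 ≤ β) (hhδ : h * δ < 1) (ha : ∀ i j, 0 ≤ a i j)
    (hs : ∀ i k, 0 ≤ s i k) (hx : ∀ i k, 0 ≤ x i k) {i : ι} {k : ℕ} (hxi : 0 < x i k) :
    0 < x i (k + 1) := by
  have := pressure_nonneg ha (hx · k) i
  have := hs i k
  have : 0 < (1 - h * δ) * x i k := mul_pos (by linarith) hxi
  rw [hdynX]
  positivity

theorem x_succ_pos_of_adj
    (hdynX : ∀ i k, x i (k + 1) = (1 - h * δ) * x i k + h * s i k * β * ∑ j, a i j * x j k)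
    (hh : 0 < h) (hβ : 0 < β) (hhδ : h * δ < 1) (ha : ∀ i j, 0 ≤ a i j)
    (hs : ∀ i k, 0 < s i k) (hx : ∀ i k, 0 ≤ x i k) {i j : ι} {k : ℕ}
    (haij : 0 < a i j) (hxj : 0 < x j k) : 0 < x i (k + 1) := by
  have := pressure_pos ha (hx · k) haij hxj
  have := hs i k
  have : 0 ≤ (1 - h * δ) * x i k := mul_nonneg (by linarith) (hx i k)
  rw [hdynX]
  positivity

theorem x_pos_of_le
    (hdynX : ∀ i k, x i (k + 1) = (1 - h * δ) * x i k + h * s i k * β * ∑ j, a i j * x j k)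
    (hh : 0 ≤ h) (hβ : 0 ≤ β) (hhδ : h * δ < 1) (ha : ∀ i j, 0 ≤ a i j)
    (hs : ∀ i k, 0 ≤ s i k) (hx : ∀ i k, 0 ≤ x i k) {i : ι} {t k : ℕ} (htk : t ≤ k)
    (hxt : 0 < x i t) : 0 < x i k := by
  induction k, htk using Nat.le_induction with
  | base => exact hxt
  | succ k _ ih => exact x_succ_pos_of_pos hdynX hh hβ hhδ ha hs hx ih

end Dynamics

theorem ENat.exists_mem_le_of_sInf_le {S : Set ℕ∞} {k : ℕ} (hS : sInf S ≤ k) :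
    ∃ t ∈ S, t ≤ k := by
  have hne : S.Nonempty := by
    by_contra hempty
    rw [Set.not_nonempty_iff_eq_empty.mp hempty, sInf_empty] at hS
    exact ENat.top_ne_natCast k (top_le_iff.mp hS).symm
  exact ⟨sInf S, csInf_mem hne, hS⟩

theorem Matrix.rank_of_upperTriangular_fin_two {K : Type*} [Field K] {p q r : K}
    (hp : p ≠ 0) (hr : r ≠ 0) : (!![p, q; 0, r] : Matrix (Fin 2) (Fin 2) K).rank = 2 := by
  have hdet : IsUnit (!![p, q; 0, r] : Matrix (Fin 2) (Fin 2) K).det := by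
    simpa [Matrix.det_fin_two_of] using mul_ne_zero hp hr
  simpa using Matrix.rank_of_isUnit _ ((Matrix.isUnit_iff_isUnit_det _).mpr hdet)

section Graph

variable {n : ℕ} {E : Fin n → Fin n → Prop} {a : Fin n → Fin n → ℝ} {h β δ : ℝ}
  {s x : Fin n → ℕ → ℝ}

theorem x_pos_of_hasWalk
    (hdynX : ∀ i k, x i (k + 1) = (1 - h * δ) * x i k + h * s i k * β * ∑ j, a i j * x j k)
    (hh : 0 < h) (hβ : 0 < β) (hhδ : h * δ < 1) (ha : ∀ i j, 0 ≤ a i j)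
    (haE : ∀ i j, E j i → 0 < a i j) (hs : ∀ i k, 0 < s i k) (hx : ∀ i k, 0 ≤ x i k)
    {t : ℕ} {j i : Fin n} (hwalk : HasWalk E t j i) (hxj : 0 < x j 0) : 0 < x i t := by
  obtain ⟨p, rfl, rfl, hedge⟩ := hwalk
  suffices ∀ l ≤ t, 0 < x (p l) l from this t le_rfl
  intro l hl
  induction l with
  | zero => exact hxj
  | succ l ih =>
    exact x_succ_pos_of_adj hdynX hh hβ hhδ ha hs hx (haE _ _ (hedge l hl)) (ih (by omega))

theorem x_pos_of_distToInfected_le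
    (hdynX : ∀ i k, x i (k + 1) = (1 - h * δ) * x i k + h * s i k * β * ∑ j, a i j * x j k)
    (hh : 0 < h) (hβ : 0 < β) (hhδ : h * δ < 1) (ha : ∀ i j, 0 ≤ a i j)
    (haE : ∀ i j, E j i → 0 < a i j) (hs : ∀ i k, 0 < s i k) (hx : ∀ i k, 0 ≤ x i k)
    {i : Fin n} {k : ℕ} (hik : distToInfected E x i ≤ k) : 0 < x i k := by
  obtain ⟨_, ⟨t, rfl, j, hxj, hwalk⟩, htk⟩ := ENat.exists_mem_le_of_sInf_le hik
  exact x_pos_of_le hdynX hh.le hβ.le hhδ ha (fun i k => (hs i k).le) hx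
    (ENat.natCast_le_natCast.mp htk)
    (x_pos_of_hasWalk hdynX hh hβ hhδ ha haE hs hx hwalk hxj)

end Graph

theorem sir_coefficient_matrix_rank_two_of_reachable_neighbor_general
    {n : ℕ} (E : Fin n → Fin n → Prop) (a : Fin n → Fin n → ℝ)
    (h β δ : ℝ) (s x : Fin n → ℕ → ℝ)
    -- SIR dynamics
    (hdynS : ∀ i k, s i (k + 1) = s i k - h * s i k * β * ∑ j, a i j * x j k)
    (hdynX : ∀ i k, x i (k + 1) = (1 - h * δ) * x i k + h * s i k * β * ∑ j, a i j * x j k)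
    -- Assumption 1 (initial conditions)
    (hs0 : ∀ i, 0 < s i 0 ∧ s i 0 ≤ 1)
    (hx0 : ∀ i, 0 ≤ x i 0 ∧ x i 0 < 1)
    (hsum0 : ∀ i, s i 0 + x i 0 = 1)
    -- Assumption 2 (model parameters)
    (hh : 0 < h) (hβ : 0 < β) (hδ : 0 < δ) (hhδ : h * δ < 1)
    (haE : ∀ i j, E j i → 0 < a i j)
    (haNonneg : ∀ i j, 0 ≤ a i j)
    (hRow : ∀ i, h * β * ∑ j, a i j < 1)
    (i₁ i₂ : Fin n)
    (k₁ k₂ : ℕ)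
    (hk₁ : sInf {t : ℕ∞ | ∃ j, E j i₁ ∧ distToInfected E x j = t} ≤ (k₁ : ℕ∞))
    (hk₂ : distToInfected E x i₂ ≤ (k₂ : ℕ∞)) :
    (!![s i₁ k₁ * ∑ j, a i₁ j * x j k₁, -(x i₁ k₁); 0, x i₂ k₂] :
      Matrix (Fin 2) (Fin 2) ℝ).rank = 2 := by
  have hinv := sir_invariant hdynS hdynX (fun i => (hs0 i).1) (fun i => (hx0 i).1)
    (fun i => (hsum0 i).le) hh.le hβ.le hδ.le hhδ.le haNonneg hRow
  have hs i k : 0 < s i k := (hinv k i).1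
  have hx i k : 0 ≤ x i k := (hinv k i).2.1
  have hxpos {i : Fin n} {k : ℕ} (hik : distToInfected E x i ≤ k) : 0 < x i k :=
    x_pos_of_distToInfected_le hdynX hh hβ hhδ haNonneg haE hs hx hik
  obtain ⟨_, ⟨j, hji₁, rfl⟩, hjk₁⟩ := ENat.exists_mem_le_of_sInf_le hk₁
  have hpressure : 0 < ∑ j, a i₁ j * x j k₁ :=
    pressure_pos haNonneg (hx · k₁) (haE i₁ j hji₁) (hxpos hjk₁)
  exact Matrix.rank_of_upperTriangular_fin_two (mul_pos (hs i₁ k₁) hpressure).ne'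
    (hxpos hk₂).ne'

/-- Lemma 2(b): Under Assumptions 1 and 2, let
`S' = {i ∈ V \ S_I' : N_i ≠ ∅, min{d_j : j ∈ N_i} ≠ +∞}` where
`S_I' = {i ∈ S_I : a_{ii} > 0}` and `N_i = {j : (j,i) ∈ E}`.  For any `i₁ ∈ S'` and any
`i₂ ∈ V` with `d_{i₂} ≠ +∞`, and for all `k₁ ≥ min{d_j : j ∈ N_{i₁}}` and `k₂ ≥ d_{i₂}`,
the `2 × 2` matrix with rows
`Φ^x_{k₁,i₁} = [s_{i₁}[k₁] ∑_{j∈N̄_{i₁}} a_{i₁j} x_j[k₁], −x_{i₁}[k₁]]` and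
`Φ^r_{k₂,i₂} = [0, x_{i₂}[k₂]]` has rank `2`. -/
theorem sir_coefficient_matrix_rank_two_of_reachable_neighbor
    {n : ℕ} (E : Fin n → Fin n → Prop) (a : Fin n → Fin n → ℝ)
    (h β δ : ℝ) (s x r : Fin n → ℕ → ℝ)
    -- SIR dynamics
    (hdynS : ∀ i k, s i (k + 1) = s i k - h * s i k * β * ∑ j, a i j * x j k)
    (hdynX : ∀ i k, x i (k + 1) = (1 - h * δ) * x i k + h * s i k * β * ∑ j, a i j * x j k)
    (hdynR : ∀ i k, r i (k + 1) = r i k + h * δ * x i k)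
    -- Assumption 1 (initial conditions)
    (hs0 : ∀ i, 0 < s i 0 ∧ s i 0 ≤ 1)
    (hx0 : ∀ i, 0 ≤ x i 0 ∧ x i 0 < 1)
    (hr0 : ∀ i, r i 0 = 0)
    (hsum0 : ∀ i, s i 0 + x i 0 = 1)
    -- Assumption 2 (model parameters)
    (hh : 0 < h) (hβ : 0 < β) (hδ : 0 < δ) (hhδ : h * δ < 1)
    (haE : ∀ i j, E j i → 0 < a i j)
    (haNonneg : ∀ i j, 0 ≤ a i j)
    (haZero : ∀ i j, ¬ E j i → j ≠ i → a i j = 0)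
    (hRow : ∀ i, h * β * ∑ j, a i j < 1)
    (i₁ i₂ : Fin n)
    (hi₁notSI' : ¬ (0 < x i₁ 0 ∧ 0 < a i₁ i₁))
    (hN : ∃ j, E j i₁)
    (hminN : sInf {t : ℕ∞ | ∃ j, E j i₁ ∧ distToInfected E x j = t} ≠ ⊤)
    (hdi₂ : distToInfected E x i₂ ≠ ⊤)
    (k₁ k₂ : ℕ)
    (hk₁ : sInf {t : ℕ∞ | ∃ j, E j i₁ ∧ distToInfected E x j = t} ≤ (k₁ : ℕ∞))
    (hk₂ : distToInfected E x i₂ ≤ (k₂ : ℕ∞)) :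
    (!![s i₁ k₁ * ∑ j, a i₁ j * x j k₁, -(x i₁ k₁); 0, x i₂ k₂] :
      Matrix (Fin 2) (Fin 2) ℝ).rank = 2 :=
  sir_coefficient_matrix_rank_two_of_reachable_neighbor_general E a h β δ s x hdynS hdynX hs0 hx0
    hsum0 hh hβ hδ hhδ haE haNonneg hRow i₁ i₂ k₁ k₂ hk₁ hk₂
end

section
/- Let M̄ be a finite set, let F_p be a 2×2 real symmetric positive definite matrix, and for each y ∈ M̄ let H_y be a 2×2 real symmetric positive semidefinite matrix; for Y ⊆ M̄ write H(Y) = ∑_{y∈Y} H_y and f_Pd(Y) = ln det(F_p + H(Y)) − ln det(F_p). Then f_Pd(∅) = 0, f_Pd is monotone nondecreasing (f_Pd(A) ≤ f_Pd(B) for all A ⊆ B ⊆ M̄), and f_Pd is submodular: for all A ⊆ B ⊆ M̄ and all y ∈ M̄ \ B, f_Pd({y} ∪ A) − f_Pd(A) ≥ f_Pd({y} ∪ B) − f_Pd(B). -/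
/-!
For 2×2 matrices `det (X + Y) = det X + tr (adj X * Y) + det Y`. The adjugate of a positive
semidefinite 2×2 matrix is again positive semidefinite and the trace of a product of two positive
semidefinite matrices is nonnegative, so adding a positive semidefinite matrix can only increase
the determinant: this is monotonicity. Submodularity is the inequality
`det (F + S + D) * det F ≤ det (F + D) * det (F + S)` for `F = F_p + H(A)`, `S = H(B \ A)`,
`D = H_y`, and the difference of its two sides is the sum of the four nonnegative terms
`tr (adj F * S * adj F * D)`, `tr (adj F * D) * det S`, `det D * tr (adj F * S)`, `det D * det S`.
-/

open Matrix

/-- The objective `f_Pd(Y) = ln det(F_p + ∑_{y∈Y} H_y) − ln det(F_p)` of Eq. (29). -/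
noncomputable def fPd {ι : Type*} [DecidableEq ι] (Fp : Matrix (Fin 2) (Fin 2) ℝ)
    (H : ι → Matrix (Fin 2) (Fin 2) ℝ) (Y : Finset ι) : ℝ :=
  Real.log (Fp + ∑ y ∈ Y, H y).det - Real.log Fp.det

namespace Matrix

open scoped ComplexOrder MatrixOrder in
theorem PosSemidef.trace_mul_nonneg {𝕜 n : Type*} [RCLike 𝕜] [Fintype n] {A B : Matrix n n 𝕜}
    (hA : A.PosSemidef) (hB : B.PosSemidef) : 0 ≤ (A * B).trace := by
  classical
  obtain ⟨C, rfl⟩ := CStarAlgebra.nonneg_iff_eq_star_mul_self.mp hA.nonneg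
  rw [star_eq_conjTranspose, mul_assoc, trace_mul_comm]
  exact (hB.mul_mul_conjTranspose_same C).trace_nonneg

/-- `adj A = J * A * Jᵀ` for the rotation `J` by a right angle, once `A` is symmetric. -/
theorem PosSemidef.adjugate_fin_two {A : Matrix (Fin 2) (Fin 2) ℝ} (hA : A.PosSemidef) :
    A.adjugate.PosSemidef := by
  have hsymm : A 1 0 = A 0 1 := by simpa using hA.isHermitian.apply 0 1
  convert hA.mul_mul_conjTranspose_same !![0, 1; -1, 0] using 1
  rw [eta_fin_two A, adjugate_fin_two_of, hsymm]
  ext i j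
  fin_cases i <;> fin_cases j <;> simp [mul_apply, Fin.sum_univ_two]

theorem det_add_fin_two {R : Type*} [CommRing R] (X Y : Matrix (Fin 2) (Fin 2) R) :
    (X + Y).det = X.det + (X.adjugate * Y).trace + Y.det := by
  rw [eta_fin_two X, eta_fin_two Y]
  simp [det_fin_two_of, adjugate_fin_two_of, trace_fin_two_of]
  ring

theorem det_add_mul_det_add_sub_det_add_add_mul_det_fin_two {R : Type*} [CommRing R]
    (F S D : Matrix (Fin 2) (Fin 2) R) :
    (F + D).det * (F + S).det - (F + S + D).det * F.det =
      (F.adjugate * S * F.adjugate * D).trace + (F.adjugate * D).trace * S.det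
        + D.det * (F.adjugate * S).trace + D.det * S.det := by
  rw [eta_fin_two F, eta_fin_two S, eta_fin_two D]
  simp [det_fin_two_of, adjugate_fin_two_of, trace_fin_two_of]
  ring

theorem PosSemidef.det_le_det_add_fin_two {F S : Matrix (Fin 2) (Fin 2) ℝ}
    (hF : F.PosSemidef) (hS : S.PosSemidef) : F.det ≤ (F + S).det := by
  rw [det_add_fin_two]
  linarith [hF.adjugate_fin_two.trace_mul_nonneg hS, hS.det_nonneg]

theorem PosSemidef.det_add_add_mul_det_le_fin_two {F S D : Matrix (Fin 2) (Fin 2) ℝ}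
    (hF : F.PosSemidef) (hS : S.PosSemidef) (hD : D.PosSemidef) :
    (F + S + D).det * F.det ≤ (F + D).det * (F + S).det := by
  have hadj := hF.adjugate_fin_two
  have hconj : (F.adjugate * S * F.adjugate).PosSemidef := by
    simpa only [hadj.isHermitian.eq] using hS.mul_mul_conjTranspose_same F.adjugate
  rw [← sub_nonneg, det_add_mul_det_add_sub_det_add_add_mul_det_fin_two]
  have := hconj.trace_mul_nonneg hD
  have := hadj.trace_mul_nonneg hD
  have := hadj.trace_mul_nonneg hS
  have := hS.det_nonneg
  have := hD.det_nonneg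
  positivity

end Matrix

theorem Real.log_sub_log_le_log_sub_log {a b c d : ℝ} (ha : 0 < a) (hb : 0 < b) (hd : 0 < d)
    (h : a * d ≤ c * b) : Real.log a - Real.log b ≤ Real.log c - Real.log d := by
  rw [← Real.log_div ha.ne' hb.ne', ← Real.log_div (by nlinarith) hd.ne']
  exact Real.log_le_log (div_pos ha hb) ((div_le_div_iff₀ hb hd).mpr h)

theorem fPd_empty_monotone_submodular_general {ι : Type*} [DecidableEq ι]
    (Fp : Matrix (Fin 2) (Fin 2) ℝ) (H : ι → Matrix (Fin 2) (Fin 2) ℝ)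
    (hFp : Fp.PosDef) (hH : ∀ y, (H y).PosSemidef) :
    fPd Fp H (∅ : Finset ι) = 0 ∧
      (∀ A B : Finset ι, A ⊆ B → fPd Fp H A ≤ fPd Fp H B) ∧
      ∀ A B : Finset ι, A ⊆ B → ∀ y ∉ B,
        fPd Fp H (insert y B) - fPd Fp H B ≤ fPd Fp H (insert y A) - fPd Fp H A := by
  have hsum (Y : Finset ι) : (∑ y ∈ Y, H y).PosSemidef := posSemidef_sum Y fun y _ => hH y
  have hpsd (Y : Finset ι) : (Fp + ∑ y ∈ Y, H y).PosSemidef := hFp.posSemidef.add (hsum Y)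
  have hdet_pos (Y : Finset ι) : 0 < (Fp + ∑ y ∈ Y, H y).det :=
    (hFp.add_posSemidef (hsum Y)).det_pos
  have hsplit {A B : Finset ι} (hAB : A ⊆ B) :
      Fp + ∑ y ∈ B, H y = (Fp + ∑ y ∈ A, H y) + ∑ y ∈ B \ A, H y := by
    rw [← Finset.sum_sdiff hAB]; abel
  refine ⟨by simp [fPd], fun A B hAB => ?_, fun A B hAB y hyB => ?_⟩
  · have hdet := (hpsd A).det_le_det_add_fin_two (hsum (B \ A))
    rw [← hsplit hAB] at hdet
    simpa only [fPd, sub_le_sub_iff_right] using Real.log_le_log (hdet_pos A) hdet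
  · have hdet := (hpsd A).det_add_add_mul_det_le_fin_two (hsum (B \ A)) (hH y)
    have hyA : y ∉ A := fun h => hyB (hAB h)
    have hinsert (Y : Finset ι) (hy : y ∉ Y) :
        Fp + ∑ x ∈ insert y Y, H x = Fp + ∑ x ∈ Y, H x + H y := by
      rw [Finset.sum_insert hy]; abel
    rw [← hsplit hAB, ← hinsert A hyA, ← hinsert B hyB] at hdet
    have := Real.log_sub_log_le_log_sub_log (hdet_pos _) (hdet_pos B) (hdet_pos A) hdet
    simp only [fPd]
    linarith

/-- for a symmetric positive definite `F_p` and symmetric positive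
semidefinite matrices `H_y`, the set function `f_Pd` vanishes on `∅`, is monotone
nondecreasing, and is submodular. -/
theorem fPd_empty_monotone_submodular {ι : Type*} [Fintype ι] [DecidableEq ι]
    (Fp : Matrix (Fin 2) (Fin 2) ℝ) (H : ι → Matrix (Fin 2) (Fin 2) ℝ)
    (hFp : Fp.PosDef) (hH : ∀ y, (H y).PosSemidef) :
    fPd Fp H (∅ : Finset ι) = 0 ∧
      (∀ A B : Finset ι, A ⊆ B → fPd Fp H A ≤ fPd Fp H B) ∧
      ∀ A B : Finset ι, A ⊆ B → ∀ y ∉ B,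
        fPd Fp H (insert y B) - fPd Fp H B ≤ fPd Fp H (insert y A) - fPd Fp H A :=
  fPd_empty_monotone_submodular_general Fp H hFp hH
end

section
/- Let M̄ be a finite ground set, c : M̄ → ℝ_{>0} a cost function, B > 0 a budget with c(y) ≤ B for all y ∈ M̄, and f : 2^{M̄} → ℝ≥0 a monotone nondecreasing submodular set function with f(∅) = 0. Let f̂ : 2^{M̄} → ℝ be an approximate oracle satisfying f̂(∅) = 0 and |f̂(Y) − f(Y)| ≤ ε/2 for all Y ⊆ M̄, where ε ≥ 0. Run the following greedy algorithm using f̂: set Y₁ ∈ argmax_{y∈M̄} f̂({y}); initialize Y₂ = ∅ and candidate set C = M̄; while C ≠ ∅, pick y* ∈ argmax_{y∈C} (f̂({y} ∪ Y₂) − f̂(Y₂))/c(y), add y* to Y₂ if c(y*) + c(Y₂) ≤ B, and remove y* from C; finally output Y_g as whichever of Y₁, Y₂ has the larger f̂ value. Then f(Y_g) ≥ (1/2)(1 − e⁻¹) f(Y*) − (B/c_min + 3/2) ε, where Y* is any maximizer of f over {Y ⊆ M̄ : c(Y) ≤ B} and c_min = min_{y∈M̄} c(y). -/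
/-!
Put `K = B / c_min`, so that every feasible set has at most `K` elements. When the greedy set is
`A` and the chosen item is `u`, submodularity bounds `f(Y*) - f(A)` by the marginal gains of the
items of `Y* \ A`; the greedy rule compares these with the gain of `u`, and the oracle errors
cost at most `2Kε`, giving `c(u) (f(Y*) - f(A) - 2Kε) ≤ B (f(A ∪ {u}) - f(A))`. Along the accepted
items and the first rejected one `u_T`, whose costs add up to more than `B`, the gap
`f(Y*) - 2Kε - f` thus shrinks by a factor `∏ (1 - c(u_t)/B) ≤ e⁻¹`, so
`f(Y_T ∪ {u_T}) ≥ (1 - e⁻¹) f(Y*) - 2Kε`. By submodularity the left side is at most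
`f(Y_T) + f({u_T})`, and each term is at most `f(Y_g) + ε` because `f̂(Y_g)` dominates
`f̂(Y₂)` with `Y₂ ⊇ Y_T`, and `f̂(Y₁) ≥ f̂({u_T})`. If no item is ever rejected, `Y₂` is everything.
-/

open Finset

section

variable {ι : Type*} [DecidableEq ι]

def IsSubmodular (f : Finset ι → ℝ) : Prop :=
  ∀ A B : Finset ι, A ⊆ B → ∀ y ∉ B, f (insert y B) - f B ≤ f (insert y A) - f A

namespace IsSubmodular

variable {f : Finset ι → ℝ}

theorem sub_le_sum_marginal (hf : IsSubmodular f) {A S : Finset ι} (hAS : Disjoint A S) :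
    f (A ∪ S) - f A ≤ ∑ y ∈ S, (f (insert y A) - f A) := by
  induction S using Finset.induction_on with
  | empty => simp
  | @insert x S hx ih =>
    rw [disjoint_insert_right] at hAS
    have hxAS : x ∉ A ∪ S := by simp [hAS.1, hx]
    rw [union_insert, sum_insert hx]
    linarith [hf A (A ∪ S) subset_union_left x hxAS, ih hAS.2]

theorem sub_le_sum_marginal_sdiff (hf : IsSubmodular f) (hm : Monotone f) (A O : Finset ι) :
    f O - f A ≤ ∑ y ∈ O \ A, (f (insert y A) - f A) := by
  have h := hf.sub_le_sum_marginal (disjoint_sdiff (s := A) (t := O))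
  rw [union_sdiff_self_eq_union] at h
  linarith [hm (subset_union_right : O ⊆ A ∪ O)]

theorem insert_le_add (hf : IsSubmodular f) (hf0 : f ∅ = 0) {A : Finset ι} {y : ι}
    (hy : y ∉ A) :
    f (insert y A) ≤ f A + f {y} := by
  have h := hf ∅ A (empty_subset A) y hy
  rw [hf0, insert_empty] at h
  linarith

end IsSubmodular

theorem prod_one_sub_le_exp_neg_sum {κ : Type*} {s : Finset κ} {a : κ → ℝ}
    (ha : ∀ i ∈ s, a i ≤ 1) : ∏ i ∈ s, (1 - a i) ≤ Real.exp (-∑ i ∈ s, a i) := by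
  rw [← sum_neg_distrib, Real.exp_sum]
  exact prod_le_prod (fun i hi => sub_nonneg.2 (ha i hi)) fun i _ => Real.one_sub_le_exp_neg (a i)

theorem nonneg_of_abs_sub_le_half {x y ε : ℝ} (h : |x - y| ≤ ε / 2) : 0 ≤ ε := by
  linarith [abs_nonneg (x - y)]

theorem greedy_run_invariant [Fintype ι] (c : ι → ℝ) {C Y : ℕ → Finset ι} {u : ℕ → ι}
    {T : ℕ} (hC0 : C 0 = univ) (hY0 : Y 0 = ∅) (hmem : ∀ t < T, u t ∈ C t)
    (hC : ∀ t < T, C (t + 1) = (C t).erase (u t))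
    (hY : ∀ t < T, Y (t + 1) = insert (u t) (Y t)) {t : ℕ} (ht : t ≤ T) :
    C t = univ \ Y t ∧ #(Y t) = t ∧ ∑ z ∈ Y t, c z = ∑ s ∈ range t, c (u s) := by
  induction t with
  | zero => simp [hC0, hY0]
  | succ t ih =>
    obtain ⟨hCt, hcard, hsum⟩ := ih (by omega)
    have hut : u t ∉ Y t := (mem_sdiff.1 (hCt ▸ hmem t ht)).2
    rw [hC t ht, hY t ht, hCt, card_insert_of_notMem hut, sum_insert hut, sum_range_succ, hsum,
      hcard, add_comm (c (u t))]
    refine ⟨?_, rfl, rfl⟩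
    ext z
    simp only [mem_erase, mem_sdiff, mem_univ, true_and, mem_insert]
    tauto

theorem monotoneOn_Iic_of_insert_or_eq {Y : ℕ → Finset ι} {u : ℕ → ι} {n : ℕ}
    (h : ∀ t < n, Y (t + 1) = insert (u t) (Y t) ∨ Y (t + 1) = Y t) :
    MonotoneOn Y (Set.Iic n) := by
  refine monotoneOn_of_le_add_one Set.ordConnected_Iic fun t _ _ ht => ?_
  rcases h t ht with h | h
  · exact h ▸ subset_insert _ _
  · exact h.ge

section ApproxGreedy

variable (c : ι → ℝ) {f fhat : Finset ι → ℝ} {ε B cmin : ℝ} {O : Finset ι}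

theorem approx_greedy_gap_le (hcmin : ∀ y, cmin ≤ c y) (hcmin0 : 0 < cmin) (hm : Monotone f)
    (hf : IsSubmodular f) (happrox : ∀ Y, |fhat Y - f Y| ≤ ε / 2) (hO : ∑ y ∈ O, c y ≤ B)
    {A : Finset ι} {u : ι}
    (hu : ∀ y ∉ A, (fhat (insert y A) - fhat A) / c y ≤ (fhat (insert u A) - fhat A) / c u) :
    f O - f A ≤ B * (max (fhat (insert u A) - fhat A) 0 / c u) + B / cmin * ε := by
  have hc y : 0 < c y := hcmin0.trans_le (hcmin y)
  -- `max _ 0` because the best oracle gain may be negative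
  set r := max (fhat (insert u A) - fhat A) 0 / c u
  have hr : 0 ≤ r := div_nonneg (le_max_right _ _) (hc u).le
  have hε := nonneg_of_abs_sub_le_half (happrox ∅)
  have hgain : ∀ y ∈ O \ A, f (insert y A) - f A ≤ c y * r + ε := by
    intro y hy
    have hratio : (fhat (insert y A) - fhat A) / c y ≤ r :=
      (hu y (mem_sdiff.1 hy).2).trans (div_le_div_of_nonneg_right (le_max_left _ _) (hc u).le)
    rw [div_le_iff₀' (hc y)] at hratio
    linarith [abs_le.1 (happrox (insert y A)), abs_le.1 (happrox A)]
  have hcost : ∑ y ∈ O \ A, c y ≤ B :=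
    (sum_le_sum_of_subset_of_nonneg sdiff_subset fun y _ _ => (hc y).le).trans hO
  have hcard : (#(O \ A) : ℝ) ≤ B / cmin := by
    rw [le_div_iff₀ hcmin0, ← nsmul_eq_mul]
    exact (card_nsmul_le_sum _ _ _ fun y _ => hcmin y).trans hcost
  calc f O - f A ≤ ∑ y ∈ O \ A, (f (insert y A) - f A) := hf.sub_le_sum_marginal_sdiff hm A O
    _ ≤ ∑ y ∈ O \ A, (c y * r + ε) := sum_le_sum hgain
    _ = (∑ y ∈ O \ A, c y) * r + #(O \ A) * ε := by
      rw [sum_add_distrib, sum_mul, sum_const, nsmul_eq_mul]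
    _ ≤ B * r + B / cmin * ε := by gcongr

theorem approx_greedy_step (hcmin : ∀ y, cmin ≤ c y) (hcmin0 : 0 < cmin) (hB : 0 < B)
    (hm : Monotone f) (hf : IsSubmodular f) (happrox : ∀ Y, |fhat Y - f Y| ≤ ε / 2)
    (hO : ∑ y ∈ O, c y ≤ B) {A : Finset ι} {u : ι}
    (hu : ∀ y ∉ A, (fhat (insert y A) - fhat A) / c y ≤ (fhat (insert u A) - fhat A) / c u) :
    f O - 2 * (B / cmin) * ε - f (insert u A) ≤
      (1 - c u / B) * (f O - 2 * (B / cmin) * ε - f A) := by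
  have hcu : 0 < c u := hcmin0.trans_le (hcmin u)
  have hε := nonneg_of_abs_sub_le_half (happrox ∅)
  have hgap := approx_greedy_gap_le c hcmin hcmin0 hm hf happrox hO hu
  set K := B / cmin
  set δ := fhat (insert u A) - fhat A
  set Δ := f (insert u A) - f A
  have hδ : max δ 0 ≤ Δ + ε := max_le
    (by linarith [abs_le.1 (happrox (insert u A)), abs_le.1 (happrox A)])
    (by linarith [hm (subset_insert u A)])
  have hK : B ≤ c u * K := by
    calc B = cmin * K := by simp only [K]; field_simp
      _ ≤ c u * K := by gcongr; exact hcmin u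
  have hcancel : c u * (B * (max δ 0 / c u)) = B * max δ 0 := by field_simp
  have key : c u * (f O - 2 * K * ε - f A) ≤ B * Δ := by
    linarith [mul_le_mul_of_nonneg_left hgap hcu.le, mul_le_mul_of_nonneg_left hδ hB.le,
      mul_le_mul_of_nonneg_right hK hε]
  have hdiv : c u / B * (f O - 2 * K * ε - f A) ≤ Δ := by
    rw [div_mul_eq_mul_div, div_le_iff₀ hB]; linarith
  rw [sub_mul, one_mul]
  linarith

theorem approx_greedy_prefix_gap_le (hcmin : ∀ y, cmin ≤ c y) (hcmin0 : 0 < cmin) (hB : 0 < B)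
    (hcB : ∀ y, c y ≤ B) (hm : Monotone f) (hf : IsSubmodular f) (hf0 : f ∅ = 0)
    (happrox : ∀ Y, |fhat Y - f Y| ≤ ε / 2) (hO : ∑ y ∈ O, c y ≤ B)
    {Y : ℕ → Finset ι} {u : ℕ → ι} {T : ℕ} (hY0 : Y 0 = ∅)
    (hY : ∀ t < T, Y (t + 1) = insert (u t) (Y t))
    (hu : ∀ t < T, ∀ y ∉ Y t, (fhat (insert y (Y t)) - fhat (Y t)) / c y ≤
      (fhat (insert (u t) (Y t)) - fhat (Y t)) / c (u t))
    {t : ℕ} (ht : t ≤ T) :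
    f O - 2 * (B / cmin) * ε - f (Y t) ≤
      (∏ s ∈ range t, (1 - c (u s) / B)) * (f O - 2 * (B / cmin) * ε) := by
  induction t with
  | zero => simp [hY0, hf0]
  | succ t ih =>
    rw [hY t ht, prod_range_succ]
    calc f O - 2 * (B / cmin) * ε - f (insert (u t) (Y t))
        ≤ (1 - c (u t) / B) * (f O - 2 * (B / cmin) * ε - f (Y t)) :=
          approx_greedy_step c hcmin hcmin0 hB hm hf happrox hO (hu t ht)
      _ ≤ (1 - c (u t) / B) *
          ((∏ s ∈ range t, (1 - c (u s) / B)) * (f O - 2 * (B / cmin) * ε)) :=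
          mul_le_mul_of_nonneg_left (ih (by omega)) (sub_nonneg.2 ((div_le_one hB).2 (hcB _)))
      _ = _ := by ring

theorem approx_greedy_rejected_ge (hcmin : ∀ y, cmin ≤ c y) (hcmin0 : 0 < cmin) (hB : 0 < B)
    (hcB : ∀ y, c y ≤ B) (hm : Monotone f) (hf : IsSubmodular f) (hf0 : f ∅ = 0)
    (happrox : ∀ Y, |fhat Y - f Y| ≤ ε / 2) (hO : ∑ y ∈ O, c y ≤ B)
    {Y : ℕ → Finset ι} {u : ℕ → ι} {T : ℕ} (hY0 : Y 0 = ∅)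
    (hY : ∀ t < T, Y (t + 1) = insert (u t) (Y t))
    (hu : ∀ t ≤ T, ∀ y ∉ Y t, (fhat (insert y (Y t)) - fhat (Y t)) / c y ≤
      (fhat (insert (u t) (Y t)) - fhat (Y t)) / c (u t))
    (hT : B < ∑ s ∈ range (T + 1), c (u s)) :
    (1 - Real.exp (-1)) * f O - 2 * (B / cmin) * ε ≤ f (insert (u T) (Y T)) := by
  set g₀ := f O - 2 * (B / cmin) * ε
  have ha : ∀ s ∈ range (T + 1), c (u s) / B ≤ 1 := fun s _ => (div_le_one hB).2 (hcB _)
  have hP : ∏ s ∈ range (T + 1), (1 - c (u s) / B) ≤ Real.exp (-1) := by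
    refine (prod_one_sub_le_exp_neg_sum ha).trans (Real.exp_le_exp.2 ?_)
    rw [← sum_div, neg_le_neg_iff, one_le_div hB]
    exact hT.le
  have hP0 : 0 ≤ ∏ s ∈ range (T + 1), (1 - c (u s) / B) :=
    prod_nonneg fun s hs => sub_nonneg.2 (ha s hs)
  have hfO : 0 ≤ f O := hf0 ▸ hm (empty_subset O)
  have hg₀ : g₀ ≤ f O := by
    have := mul_nonneg (div_nonneg hB.le hcmin0.le) (nonneg_of_abs_sub_le_half (happrox ∅))
    linarith
  have hgap : g₀ - f (insert (u T) (Y T)) ≤ Real.exp (-1) * f O :=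
    calc g₀ - f (insert (u T) (Y T)) ≤ (1 - c (u T) / B) * (g₀ - f (Y T)) :=
          approx_greedy_step c hcmin hcmin0 hB hm hf happrox hO (hu T le_rfl)
      _ ≤ (1 - c (u T) / B) * ((∏ s ∈ range T, (1 - c (u s) / B)) * g₀) :=
          mul_le_mul_of_nonneg_left
            (approx_greedy_prefix_gap_le c hcmin hcmin0 hB hcB hm hf hf0 happrox hO hY0 hY
              (fun t ht => hu t ht.le) le_rfl)
            (sub_nonneg.2 (ha T (self_mem_range_succ T)))
      _ = (∏ s ∈ range (T + 1), (1 - c (u s) / B)) * g₀ := by rw [prod_range_succ]; ring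
      _ ≤ (∏ s ∈ range (T + 1), (1 - c (u s) / B)) * f O := mul_le_mul_of_nonneg_left hg₀ hP0
      _ ≤ Real.exp (-1) * f O := mul_le_mul_of_nonneg_right hP hfO
  linarith

theorem approx_greedy_first_rejection_ge [Fintype ι] (hcmin : ∀ y, cmin ≤ c y) (hcmin0 : 0 < cmin)
    (hB : 0 < B) (hcB : ∀ y, c y ≤ B) (hm : Monotone f) (hf : IsSubmodular f) (hf0 : f ∅ = 0)
    (happrox : ∀ Y, |fhat Y - f Y| ≤ ε / 2) (hO : ∑ y ∈ O, c y ≤ B)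
    {C Y : ℕ → Finset ι} {u : ℕ → ι} {T : ℕ} (hC0 : C 0 = univ) (hY0 : Y 0 = ∅)
    (hmem : ∀ t ≤ T, u t ∈ C t)
    (hmax : ∀ t ≤ T, ∀ y ∈ C t, (fhat (insert y (Y t)) - fhat (Y t)) / c y ≤
      (fhat (insert (u t) (Y t)) - fhat (Y t)) / c (u t))
    (hC : ∀ t < T, C (t + 1) = (C t).erase (u t))
    (hY : ∀ t < T, Y (t + 1) = insert (u t) (Y t))
    (hrej : B < c (u T) + ∑ z ∈ Y T, c z) :
    (1 - Real.exp (-1)) * f O - 2 * (B / cmin) * ε ≤ f (Y T) + f {u T} := by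
  have hinv {t} (ht : t ≤ T) :=
    greedy_run_invariant c hC0 hY0 (fun t ht => hmem t ht.le) hC hY ht
  have hgreedy := approx_greedy_rejected_ge c hcmin hcmin0 hB hcB hm hf hf0 happrox hO hY0 hY
    (fun t ht y hy => hmax t ht y (by rw [(hinv ht).1]; simp [hy]))
    (by rw [sum_range_succ, ← (hinv le_rfl).2.2]; linarith)
  have huT : u T ∉ Y T := (mem_sdiff.1 ((hinv le_rfl).1 ▸ hmem T le_rfl)).2
  linarith [hf.insert_le_add hf0 huT]

end ApproxGreedy

end

theorem greedy_knapsack_submodular_guarantee_general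
    {ι : Type*} [Fintype ι] [DecidableEq ι] [Nonempty ι]
    (c : ι → ℝ) (hc : ∀ y, 0 < c y)
    (B : ℝ) (hcB : ∀ y, c y ≤ B)
    (f : Finset ι → ℝ) (hfempty : f ∅ = 0)
    (hmono : ∀ A B' : Finset ι, A ⊆ B' → f A ≤ f B')
    (hsubmod : ∀ A B' : Finset ι, A ⊆ B' → ∀ y ∉ B',
      f (insert y B') - f B' ≤ f (insert y A) - f A)
    (ε : ℝ)
    (fhat : Finset ι → ℝ)
    (happrox : ∀ Y : Finset ι, |fhat Y - f Y| ≤ ε / 2)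
    -- line 3: Y₁ = {y₁} maximizes f̂ over singletons
    (y₁ : ι) (hy₁ : ∀ y : ι, fhat {y} ≤ fhat {y₁})
    -- lines 4–11: the while loop
    (C Y : ℕ → Finset ι)
    (hC0 : C 0 = Finset.univ) (hY0 : Y 0 = ∅)
    (hstep : ∀ t < Fintype.card ι, ∃ ys ∈ C t,
      (∀ y ∈ C t, (fhat (insert y (Y t)) - fhat (Y t)) / c y ≤
          (fhat (insert ys (Y t)) - fhat (Y t)) / c ys) ∧
        C (t + 1) = (C t).erase ys ∧
        (c ys + ∑ z ∈ Y t, c z ≤ B → Y (t + 1) = insert ys (Y t)) ∧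
        (¬ c ys + ∑ z ∈ Y t, c z ≤ B → Y (t + 1) = Y t))
    -- line 12: the output Y_g
    (Yg : Finset ι)
    (hYgmax : fhat Yg = max (fhat {y₁}) (fhat (Y (Fintype.card ι))))
    -- Y* is an optimal solution of the knapsack-constrained problem
    (Ystar : Finset ι) (hfeas : ∑ y ∈ Ystar, c y ≤ B) :
    f Yg ≥ (1 / 2) * (1 - Real.exp (-1)) * f Ystar -
      (B / (Finset.univ.inf' Finset.univ_nonempty c) + 3 / 2) * ε := by
  obtain ⟨y₀, -, hy₀⟩ := exists_mem_eq_inf' univ_nonempty c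
  have hcmin : ∀ y, univ.inf' univ_nonempty c ≤ c y := fun y => inf'_le c (mem_univ y)
  have hcmin0 : 0 < univ.inf' univ_nonempty c := hy₀ ▸ hc y₀
  have hB : 0 < B := (hc y₁).trans_le (hcB y₁)
  have hε := nonneg_of_abs_sub_le_half (happrox ∅)
  have hfO : 0 ≤ f Ystar := hfempty ▸ hmono _ _ (empty_subset _)
  have hYg : ∀ Z, fhat Z ≤ fhat Yg → f Z ≤ f Yg + ε := fun Z hZ => by
    linarith [abs_le.1 (happrox Z), abs_le.1 (happrox Yg)]
  have hYn := hYg _ (hYgmax ▸ le_max_right _ _)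
  choose! u hmem hmax hC hacc hrej using hstep
  by_cases hall : ∀ t < Fintype.card ι, c (u t) + ∑ z ∈ Y t, c z ≤ B
  · obtain ⟨-, hcard, -⟩ := greedy_run_invariant c hC0 hY0 hmem hC
      (fun t ht => hacc t ht (hall t ht)) le_rfl
    rw [eq_univ_of_card _ hcard] at hYn
    have hK : 0 ≤ B / univ.inf' univ_nonempty c := by positivity
    linarith [hmono _ _ (subset_univ Ystar), mul_nonneg hfO (Real.exp_pos (-1)).le,
      mul_nonneg hK hε]
  push Not at hall
  obtain ⟨hTn, hTrej⟩ := Nat.find_spec hall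
  set T := Nat.find hall
  have hTacc : ∀ t < T, c (u t) + ∑ z ∈ Y t, c z ≤ B :=
    fun t ht => not_lt.1 fun h => Nat.find_min hall ht ⟨by omega, h⟩
  have hgreedy := approx_greedy_first_rejection_ge c hcmin hcmin0 hB hcB hmono hsubmod hfempty
    happrox hfeas hC0 hY0 (fun t ht => hmem t (by omega)) (fun t ht => hmax t (by omega))
    (fun t ht => hC t (by omega)) (fun t ht => hacc t (by omega) (hTacc t ht)) hTrej
  have hYmono := monotoneOn_Iic_of_insert_or_eq fun t ht => (em _).imp (hacc t ht) (hrej t ht)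
  have hYT := hmono _ _ (hYmono (Set.mem_Iic.2 hTn.le) Set.self_mem_Iic hTn.le)
  have hsingle := hYg {u T} ((hy₁ _).trans (hYgmax ▸ le_max_left _ _))
  linarith

/-- Theorem 3: performance guarantee of the greedy algorithm
(Algorithm 2) for maximizing a monotone nondecreasing submodular set function `f`
(evaluated through an approximate oracle `f̂` with `|f̂(Y) − f(Y)| ≤ ε/2`) subject to
a knapsack constraint `c(Y) ≤ B`.

The run of the algorithm is encoded by the sequences `C t` (remaining candidates) and
`Y t` (current greedy set) for `t = 0, …, |M̄|`: at each step some `y*` maximizing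
`(f̂(Y ∪ {y}) − f̂(Y))/c(y)` over the candidates is removed from `C` and added to `Y`
iff it fits in the budget.  `Y₂ = Y |M̄|` is the final greedy set, `Y₁ = {y₁}` is a
singleton maximizing `f̂({y})`, and the output `Y_g` is whichever of `Y₁, Y₂` has the
larger `f̂`-value.  Then
`f(Y_g) ≥ (1/2)(1 − e⁻¹) f(Y*) − (B/c_min + 3/2) ε`. -/
theorem greedy_knapsack_submodular_guarantee
    {ι : Type*} [Fintype ι] [DecidableEq ι] [Nonempty ι]
    (c : ι → ℝ) (hc : ∀ y, 0 < c y)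
    (B : ℝ) (hB : 0 < B) (hcB : ∀ y, c y ≤ B)
    (f : Finset ι → ℝ) (hfempty : f ∅ = 0) (hfnonneg : ∀ Y, 0 ≤ f Y)
    (hmono : ∀ A B' : Finset ι, A ⊆ B' → f A ≤ f B')
    (hsubmod : ∀ A B' : Finset ι, A ⊆ B' → ∀ y ∉ B',
      f (insert y B') - f B' ≤ f (insert y A) - f A)
    (ε : ℝ) (hε : 0 ≤ ε)
    (fhat : Finset ι → ℝ) (hfhatempty : fhat ∅ = 0)
    (happrox : ∀ Y : Finset ι, |fhat Y - f Y| ≤ ε / 2)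
    -- line 3: Y₁ = {y₁} maximizes f̂ over singletons
    (y₁ : ι) (hy₁ : ∀ y : ι, fhat {y} ≤ fhat {y₁})
    -- lines 4–11: the while loop
    (C Y : ℕ → Finset ι)
    (hC0 : C 0 = Finset.univ) (hY0 : Y 0 = ∅)
    (hstep : ∀ t < Fintype.card ι, ∃ ys ∈ C t,
      (∀ y ∈ C t, (fhat (insert y (Y t)) - fhat (Y t)) / c y ≤
          (fhat (insert ys (Y t)) - fhat (Y t)) / c ys) ∧
        C (t + 1) = (C t).erase ys ∧
        (c ys + ∑ z ∈ Y t, c z ≤ B → Y (t + 1) = insert ys (Y t)) ∧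
        (¬ c ys + ∑ z ∈ Y t, c z ≤ B → Y (t + 1) = Y t))
    -- line 12: the output Y_g
    (Yg : Finset ι)
    (hYg : Yg = {y₁} ∨ Yg = Y (Fintype.card ι))
    (hYgmax : fhat Yg = max (fhat {y₁}) (fhat (Y (Fintype.card ι))))
    -- Y* is an optimal solution of the knapsack-constrained problem
    (Ystar : Finset ι) (hfeas : ∑ y ∈ Ystar, c y ≤ B)
    (hopt : ∀ Z : Finset ι, ∑ y ∈ Z, c y ≤ B → f Z ≤ f Ystar) :
    f Yg ≥ (1 / 2) * (1 - Real.exp (-1)) * f Ystar -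
      (B / (Finset.univ.inf' Finset.univ_nonempty c) + 3 / 2) * ε :=
  greedy_knapsack_submodular_guarantee_general c hc B hcB f hfempty hmono hsubmod ε fhat happrox y₁
    hy₁ C Y hC0 hY0 hstep Yg hYgmax Ystar hfeas
end

section
/- Let M̄ be a finite ground set, c : M̄ → ℝ_{>0} a cost function, B > 0 a budget with c(y) ≤ B for all y ∈ M̄, and f : 2^{M̄} → ℝ≥0 a monotone nondecreasing set function with f(∅) = 0 (in the paper, f = f_Pa(Y) = Tr(F_p⁻¹) − Tr((F_p + ∑_{y∈Y} H_y)⁻¹) for a 2×2 symmetric positive definite F_p and 2×2 symmetric positive semidefinite matrices H_y). Let f̂ : 2^{M̄} → ℝ be an approximate oracle satisfying f̂(∅) = 0 and |f̂(Y) − f(Y)| ≤ ε/2 for all Y ⊆ M̄, where ε ≥ 0. Run the greedy algorithm: set Y₁ ∈ argmax_{y∈M̄} f̂({y}); initialize Y₂ = ∅ and candidate set C = M̄; while C ≠ ∅, pick y* ∈ argmax_{y∈C} (f̂({y} ∪ Y₂) − f̂(Y₂))/c(y), add y* to Y₂ if c(y*) + c(Y₂) ≤ B, and remove y* from C; output Y_g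 as whichever of Y₁, Y₂ has the larger f̂ value. For j = 0,...,|Y₂| let Y₂^j be the set of the first j elements added to Y₂ (Y₂⁰ = ∅). Let γ₁ be the largest real number such that ∑_{y∈A\Y₂^j} ( f({y} ∪ Y₂^j) − f(Y₂^j) ) ≥ γ₁ ( f(A ∪ Y₂^j) − f(Y₂^j) ) for all A ⊆ M̄ and all j ∈ {0,...,|Y₂|}, and let γ₂ be the largest real number such that f(Y₁) − f(∅) ≥ γ₂ ( f({y} ∪ Y₂^j) − f(Y₂^j) ) for all j ∈ {0,...,|Y₂|} and all y ∈ M̄ \ Y₂^j with c(y) + c(Y₂^j) > B. Then f(Y_g) ≥ (min{γ₂,1}/2)(1 − e^{−γ₁}) f(Y*) − ((B + c_max)/c_min + 1) ε, where Y* is any maximizer of f over {Y ⊆ M̄ : c(Y) ≤ B}, c_min = min_{y∈M̄} c(y), and c_max = max_{y∈M̄} c(y). -/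
/-!
Cost-benefit greedy analysis in which the type-1 ratio `γ₁` replaces submodularity. While no
element of a feasible set `S` has been discarded, `γ₁`, the greedy choice of `s` by estimated
density and the oracle error give `γ₁ (f S - f X) ≤ B (density of s + 2ε/c_min)`, so accepting `s`
multiplies the gap `f S - f X` by `1 - γ₁ c(s)/B ≤ exp(-γ₁ c(s)/B)`, up to an additive
`2 ε c(s)/c_min`. If every element of `S` is accepted, `S ⊆ Y₂`. Otherwise, at the first rejected
`s ∈ S`, adding `s` virtually pushes the cost past `B`, so
`f (Y₂^τ ∪ {s}) ≥ (1 - e^{-γ₁}) f S - 2 (B + c_max) ε / c_min`; the type-2 ratio `γ₂` splits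
this value between `f(Y₁)` and `f(Y₂^τ)`, and the better of `Y₁, Y₂` keeps half of it, up to `ε`.
-/

open Finset Real

theorem Nat.exists_lt_and_forall_le_and_not_succ {Q : ℕ → Prop} {n : ℕ} (h0 : Q 0)
    (hn : ¬ Q n) : ∃ τ < n, (∀ t ≤ τ, Q t) ∧ ¬ Q (τ + 1) := by
  obtain ⟨τ, hτ, t, ht, hQt⟩ := Nat.exists_not_and_succ_of_not_zero_of_exists
    (p := fun k => ∃ t ≤ k, ¬ Q t) (by simpa using h0) ⟨n, n, le_rfl, hn⟩
  push Not at hτ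
  obtain rfl : t = τ + 1 := by
    by_contra hne
    exact hQt (hτ t (by omega))
  exact ⟨τ, by_contra fun h => hn (hτ n (by omega)), hτ, hQt⟩

theorem le_exp_neg_add_mul_add_of_le_one_sub_mul_add {D D' F x a e δ : ℝ} (hF : 0 ≤ F)
    (ha₀ : 0 ≤ a) (ha₁ : a ≤ 1) (he : 0 ≤ e) (hD : D ≤ exp (-x) * F + e)
    (hD' : D' ≤ (1 - a) * D + δ) : D' ≤ exp (-(x + a)) * F + (e + δ) := by
  have hlin : 1 - a ≤ exp (-a) := by linarith [add_one_le_exp (-a)]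
  have h₁ : (1 - a) * D ≤ (1 - a) * (exp (-x) * F + e) :=
    mul_le_mul_of_nonneg_left hD (by linarith)
  have h₂ : (1 - a) * exp (-x) * F ≤ exp (-a) * exp (-x) * F := by gcongr
  have h₃ : (1 - a) * e ≤ e := by nlinarith
  rw [neg_add, exp_add]
  linarith

theorem min_mul_le_add_of_mul_sub_le {γ a b d : ℝ} (hb : 0 ≤ b) (hba : b ≤ a)
    (h : γ * (a - b) ≤ d) : min γ 1 * a ≤ d + b := by
  rcases le_total γ 1 with hγ1 | hγ1
  · rw [min_eq_left hγ1]
    nlinarith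
  · rw [min_eq_right hγ1]
    nlinarith

theorem max_sub_le_of_eq_max {ι : Type*} {f fhat : Finset ι → ℝ} {ε : ℝ}
    (happrox : ∀ Y, |fhat Y - f Y| ≤ ε / 2) {A A' Z : Finset ι}
    (hZ : fhat Z = max (fhat A) (fhat A')) : max (f A) (f A') - ε ≤ f Z := by
  have hA := abs_le.mp (happrox A)
  have hA' := abs_le.mp (happrox A')
  have hZ' := abs_le.mp (happrox Z)
  have := le_max_left (fhat A) (fhat A')
  have := le_max_right (fhat A) (fhat A')
  rw [sub_le_iff_le_add, max_le_iff]
  constructor <;> linarith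

section Greedy

variable {ι : Type*} [DecidableEq ι]

theorem abs_marginal_sub_le {f fhat : Finset ι → ℝ} {ε : ℝ}
    (happrox : ∀ Y, |fhat Y - f Y| ≤ ε / 2) (y : ι) (X : Finset ι) :
    |(fhat (insert y X) - fhat X) - (f (insert y X) - f X)| ≤ ε := by
  have h₁ := abs_le.mp (happrox (insert y X))
  have h₂ := abs_le.mp (happrox X)
  exact abs_le.mpr ⟨by linarith, by linarith⟩

def IsBestRatio (c : ι → ℝ) (fhat : Finset ι → ℝ) (X K : Finset ι) (s : ι) : Prop :=
  ∀ y ∈ K, (fhat (insert y X) - fhat X) / c y ≤ (fhat (insert s X) - fhat X) / c s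

section Step

variable {c : ι → ℝ} {f fhat : Finset ι → ℝ} {B cmin ε : ℝ} {S X : Finset ι} {s : ι}

theorem sum_marginal_le_of_isBestRatio (hcmin : 0 < cmin) (hcmin_le : ∀ y, cmin ≤ c y)
    (hε : 0 ≤ ε) (happrox : ∀ Y, |fhat Y - f Y| ≤ ε / 2)
    (hmono : ∀ A A' : Finset ι, A ⊆ A' → f A ≤ f A') (hS : ∑ y ∈ S, c y ≤ B)
    (hbest : IsBestRatio c fhat X (S \ X) s) :
    ∑ y ∈ S \ X, (f (insert y X) - f X) ≤
      B * ((f (insert s X) - f X) / c s + 2 * (ε / cmin)) := by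
  have hc : ∀ y, 0 < c y := fun y => hcmin.trans_le (hcmin_le y)
  set r := (fhat (insert s X) - fhat X) / c s
  set κ := ε / cmin
  set cS := ∑ y ∈ S \ X, c y
  have hmarg : ∀ y ∈ S \ X, f (insert y X) - f X ≤ c y * r + ε := fun y hy => by
    have := abs_le.mp (abs_marginal_sub_le happrox y X)
    have := (div_le_iff₀' (hc y)).mp (hbest y hy)
    linarith
  have hcard : (#(S \ X) : ℝ) * ε ≤ cS * κ := by
    have := card_nsmul_le_sum (S \ X) c cmin fun y _ => hcmin_le y
    rw [nsmul_eq_mul] at this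
    calc (#(S \ X) : ℝ) * ε = #(S \ X) * cmin * κ := by simp only [κ]; field_simp
      _ ≤ cS * κ := by gcongr
  have hcS : cS ≤ B := (sum_le_sum_of_subset_of_nonneg sdiff_subset
    fun y _ _ => (hc y).le).trans hS
  have hκs : ε / c s ≤ κ := div_le_div_of_nonneg_left hε hcmin (hcmin_le s)
  have hs := abs_le.mp (abs_marginal_sub_le happrox s X)
  have hr_low : -κ ≤ r := by
    have : 0 ≤ f (insert s X) - f X := sub_nonneg.mpr (hmono _ _ (subset_insert s X))
    calc -κ ≤ -ε / c s := by rw [neg_div]; exact neg_le_neg hκs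
      _ ≤ r := div_le_div_of_nonneg_right (by linarith) (hc s).le
  have hr_up : r ≤ (f (insert s X) - f X) / c s + κ := by
    calc r ≤ (f (insert s X) - f X + ε) / c s :=
          div_le_div_of_nonneg_right (by linarith) (hc s).le
      _ ≤ _ := by rw [add_div]; linarith
  have hB : 0 ≤ B := (sum_nonneg fun y _ => (hc y).le).trans hcS
  -- `r` may be negative, so the unused budget `B - c(S \ X)` is paid for by `r ≥ -κ`.
  have hslack : 0 ≤ (B - cS) * (r + κ) := mul_nonneg (by linarith) (by linarith)
  calc ∑ y ∈ S \ X, (f (insert y X) - f X) ≤ ∑ y ∈ S \ X, (c y * r + ε) := sum_le_sum hmarg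
    _ = cS * r + #(S \ X) * ε := by
      rw [sum_add_distrib, ← sum_mul, sum_const, nsmul_eq_mul]
    _ ≤ B * (r + κ) := by linarith
    _ ≤ B * ((f (insert s X) - f X) / c s + 2 * κ) :=
      mul_le_mul_of_nonneg_left (by linarith) hB

theorem sub_insert_le_of_isBestRatio {γ : ℝ} (hB : 0 < B) (hcmin : 0 < cmin)
    (hcmin_le : ∀ y, cmin ≤ c y) (hε : 0 ≤ ε) (happrox : ∀ Y, |fhat Y - f Y| ≤ ε / 2)
    (hmono : ∀ A A' : Finset ι, A ⊆ A' → f A ≤ f A') (hS : ∑ y ∈ S, c y ≤ B) (hγ : 0 ≤ γ)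
    (hratio : γ * (f (S ∪ X) - f X) ≤ ∑ y ∈ S \ X, (f (insert y X) - f X))
    (hbest : IsBestRatio c fhat X (S \ X) s) :
    f S - f (insert s X) ≤ (1 - γ * c s / B) * (f S - f X) + 2 * (ε / cmin) * c s := by
  have hcs : 0 < c s := hcmin.trans_le (hcmin_le s)
  have hunion : γ * (f S - f X) ≤ γ * (f (S ∪ X) - f X) :=
    mul_le_mul_of_nonneg_left (by linarith [hmono S (S ∪ X) subset_union_left]) hγ
  have hsum := (hunion.trans hratio).trans
    (sum_marginal_le_of_isBestRatio hcmin hcmin_le hε happrox hmono hS hbest)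
  have hscaled : γ * c s / B * (f S - f X) ≤
      f (insert s X) - f X + 2 * (ε / cmin) * c s :=
    calc γ * c s / B * (f S - f X) = c s / B * (γ * (f S - f X)) := by ring
      _ ≤ c s / B * (B * ((f (insert s X) - f X) / c s + 2 * (ε / cmin))) :=
        mul_le_mul_of_nonneg_left hsum (by positivity)
      _ = _ := by field_simp
  linarith [show (1 - γ * c s / B) * (f S - f X) = f S - f X - γ * c s / B * (f S - f X) by
    ring]

theorem gap_insert_le {γ : ℝ} (hB : 0 < B) (hcmin : 0 < cmin)
    (hcmin_le : ∀ y, cmin ≤ c y) (hε : 0 ≤ ε) (happrox : ∀ Y, |fhat Y - f Y| ≤ ε / 2)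
    (hmono : ∀ A A' : Finset ι, A ⊆ A' → f A ≤ f A') (hS : ∑ y ∈ S, c y ≤ B)
    (hF : 0 ≤ f S) (hγ₀ : 0 ≤ γ) (hγ₁ : γ ≤ 1) (hcB : c s ≤ B) (hs : s ∉ X)
    (hratio : γ * (f (S ∪ X) - f X) ≤ ∑ y ∈ S \ X, (f (insert y X) - f X))
    (hbest : IsBestRatio c fhat X (S \ X) s)
    (hX : f S - f X ≤
      exp (-(γ * (∑ y ∈ X, c y) / B)) * f S + 2 * (ε / cmin) * ∑ y ∈ X, c y) :
    f S - f (insert s X) ≤ exp (-(γ * (∑ y ∈ insert s X, c y) / B)) * f S +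
      2 * (ε / cmin) * ∑ y ∈ insert s X, c y := by
  have hcs : 0 < c s := hcmin.trans_le (hcmin_le s)
  have ha₁ : γ * c s / B ≤ 1 := by
    rw [div_le_one hB]
    nlinarith
  have he : 0 ≤ 2 * (ε / cmin) * ∑ y ∈ X, c y :=
    mul_nonneg (by positivity) (sum_nonneg fun y _ => hcmin.le.trans (hcmin_le y))
  have := le_exp_neg_add_mul_add_of_le_one_sub_mul_add hF (by positivity) ha₁ he hX
    (sub_insert_le_of_isBestRatio hB hcmin hcmin_le hε happrox hmono hS hγ₀ hratio hbest)
  rw [sum_insert hs]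
  exact this.trans_eq (by ring_nf)

end Step

theorem IsBestRatio.mono {c : ι → ℝ} {fhat : Finset ι → ℝ} {X K K' : Finset ι} {s : ι}
    (h : IsBestRatio c fhat X K s) (hK : K' ⊆ K) : IsBestRatio c fhat X K' s :=
  fun y hy => h y (hK hy)

def IsGreedyStep (c : ι → ℝ) (B : ℝ) (fhat : Finset ι → ℝ) (C Y C' Y' : Finset ι) (s : ι) :
    Prop :=
  s ∈ C ∧ IsBestRatio c fhat Y C s ∧ C' = C.erase s ∧
    (c s + ∑ z ∈ Y, c z ≤ B → Y' = insert s Y) ∧ (¬ c s + ∑ z ∈ Y, c z ≤ B → Y' = Y)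

namespace IsGreedyStep

variable {c : ι → ℝ} {B : ℝ} {fhat : Finset ι → ℝ} {C Y C' Y' : Finset ι} {s : ι}

theorem subset (h : IsGreedyStep c B fhat C Y C' Y' s) : Y ⊆ Y' := by
  obtain ⟨-, -, -, hadd, hrej⟩ := h
  by_cases hfit : c s + ∑ z ∈ Y, c z ≤ B
  · rw [hadd hfit]
    exact subset_insert s Y
  · rw [hrej hfit]

theorem disjoint (h : IsGreedyStep c B fhat C Y C' Y' s) (hCY : Disjoint C Y) :
    Disjoint C' Y' := by
  obtain ⟨-, -, rfl, hadd, hrej⟩ := h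
  have hC : Disjoint (C.erase s) Y := disjoint_of_subset_left (erase_subset s C) hCY
  by_cases hfit : c s + ∑ z ∈ Y, c z ≤ B
  · rw [hadd hfit, disjoint_insert_right]
    exact ⟨notMem_erase s C, hC⟩
  · rwa [hrej hfit]

theorem card_cand (h : IsGreedyStep c B fhat C Y C' Y' s) : #C' = #C - 1 := by
  obtain ⟨hs, -, rfl, -⟩ := h
  exact card_erase_of_mem hs

theorem sum_le (h : IsGreedyStep c B fhat C Y C' Y' s) (hCY : Disjoint C Y)
    (hY : ∑ z ∈ Y, c z ≤ B) : ∑ z ∈ Y', c z ≤ B := by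
  obtain ⟨hs, -, -, hadd, hrej⟩ := h
  by_cases hfit : c s + ∑ z ∈ Y, c z ≤ B
  · rwa [hadd hfit, sum_insert (disjoint_left.mp hCY hs)]
  · rwa [hrej hfit]

end IsGreedyStep

/-- `C t` and `Y t` are the candidate set `C` and the greedy set `Y₂` of Algorithm 2 after `t`
passes of its while loop. -/
structure IsGreedyRun [Fintype ι] (c : ι → ℝ) (B : ℝ) (fhat : Finset ι → ℝ)
    (C Y : ℕ → Finset ι) : Prop where
  cand_zero : C 0 = univ
  sel_zero : Y 0 = ∅
  step : ∀ t < Fintype.card ι,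
    ∃ s, IsGreedyStep c B fhat (C t) (Y t) (C (t + 1)) (Y (t + 1)) s

namespace IsGreedyRun

variable [Fintype ι] {c : ι → ℝ} {B : ℝ} {fhat : Finset ι → ℝ} {C Y : ℕ → Finset ι}

theorem sel_subset_sel (hrun : IsGreedyRun c B fhat C Y) {s t : ℕ} (hst : s ≤ t)
    (ht : t ≤ Fintype.card ι) : Y s ⊆ Y t := by
  induction t, hst using Nat.le_induction with
  | base => rfl
  | succ t _ ih =>
    obtain ⟨_, hstep⟩ := hrun.step t (by omega)
    exact (ih (by omega)).trans hstep.subset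

theorem disjoint_cand_sel (hrun : IsGreedyRun c B fhat C Y) {t : ℕ}
    (ht : t ≤ Fintype.card ι) : Disjoint (C t) (Y t) := by
  induction t with
  | zero => simp [hrun.sel_zero]
  | succ t ih =>
    obtain ⟨_, hstep⟩ := hrun.step t (by omega)
    exact hstep.disjoint (ih (by omega))

theorem card_cand (hrun : IsGreedyRun c B fhat C Y) {t : ℕ} (ht : t ≤ Fintype.card ι) :
    #(C t) = Fintype.card ι - t := by
  induction t with
  | zero => simp [hrun.cand_zero]
  | succ t ih =>
    obtain ⟨_, hstep⟩ := hrun.step t (by omega)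
    rw [hstep.card_cand, ih (by omega)]
    omega

theorem cand_eq_empty (hrun : IsGreedyRun c B fhat C Y) : C (Fintype.card ι) = ∅ :=
  card_eq_zero.mp (by rw [hrun.card_cand le_rfl, Nat.sub_self])

theorem sum_sel_le (hrun : IsGreedyRun c B fhat C Y) (hB : 0 ≤ B) {t : ℕ}
    (ht : t ≤ Fintype.card ι) : ∑ z ∈ Y t, c z ≤ B := by
  induction t with
  | zero => simpa [hrun.sel_zero] using hB
  | succ t ih =>
    obtain ⟨_, hstep⟩ := hrun.step t (by omega)
    exact hstep.sum_le (hrun.disjoint_cand_sel (by omega)) (ih (by omega))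

theorem exists_first_rejection (hrun : IsGreedyRun c B fhat C Y) {S : Finset ι}
    (hS : ¬ S ⊆ Y (Fintype.card ι)) :
    ∃ τ < Fintype.card ι, (∀ t ≤ τ, S \ Y t ⊆ C t) ∧ ∃ s ∈ S, s ∉ Y τ ∧
      IsBestRatio c fhat (Y τ) (C τ) s ∧ B < c s + ∑ z ∈ Y τ, c z := by
  obtain ⟨τ, hτ, hinv, hfail⟩ := Nat.exists_lt_and_forall_le_and_not_succ
    (Q := fun t => S \ Y t ⊆ C t) (n := Fintype.card ι) (by simp [hrun.cand_zero])
    (by simpa [hrun.cand_eq_empty] using hS)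
  obtain ⟨s, hstep⟩ := hrun.step τ hτ
  have hsub := hstep.subset
  obtain ⟨-, hbest, hC, hadd, -⟩ := hstep
  obtain ⟨y, hy, hyC⟩ := not_subset.mp hfail
  rw [mem_sdiff] at hy
  have hyτ : y ∉ Y τ := fun h => hy.2 (hsub h)
  obtain rfl : y = s := by
    by_contra hne
    exact hyC (hC ▸ mem_erase.mpr ⟨hne, hinv τ le_rfl (mem_sdiff.mpr ⟨hy.1, hyτ⟩)⟩)
  exact ⟨τ, hτ, hinv, y, hy.1, hyτ, hbest,
    not_le.mp fun hfit => hy.2 (hadd hfit ▸ mem_insert_self y (Y τ))⟩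

variable {f : Finset ι → ℝ} {S : Finset ι} {cmin ε γ : ℝ}

theorem gap_le (hrun : IsGreedyRun c B fhat C Y) (hB : 0 < B) (hcmin : 0 < cmin)
    (hcmin_le : ∀ y, cmin ≤ c y) (hcB : ∀ y, c y ≤ B) (hε : 0 ≤ ε)
    (happrox : ∀ Y, |fhat Y - f Y| ≤ ε / 2) (hf : ∀ A, 0 ≤ f A)
    (hmono : ∀ A A' : Finset ι, A ⊆ A' → f A ≤ f A') (hS : ∑ y ∈ S, c y ≤ B)
    (hγ₀ : 0 ≤ γ) (hγ₁ : γ ≤ 1)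
    (hratio : ∀ t ≤ Fintype.card ι,
      γ * (f (S ∪ Y t) - f (Y t)) ≤ ∑ y ∈ S \ Y t, (f (insert y (Y t)) - f (Y t)))
    {τ : ℕ} (hτ : τ ≤ Fintype.card ι) (hinv : ∀ t < τ, S \ Y t ⊆ C t) {t : ℕ}
    (ht : t ≤ τ) :
    f S - f (Y t) ≤
      exp (-(γ * (∑ y ∈ Y t, c y) / B)) * f S + 2 * (ε / cmin) * ∑ y ∈ Y t, c y := by
  induction t with
  | zero => simpa [hrun.sel_zero] using hf ∅
  | succ t ih =>
    obtain ⟨s, hsC, hbest, -, hadd, hrej⟩ := hrun.step t (by omega)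
    by_cases hfit : c s + ∑ z ∈ Y t, c z ≤ B
    · rw [hadd hfit]
      exact gap_insert_le hB hcmin hcmin_le hε happrox hmono hS (hf S) hγ₀ hγ₁ (hcB s)
        (disjoint_left.mp (hrun.disjoint_cand_sel (by omega)) hsC) (hratio t (by omega))
        (hbest.mono (hinv t (by omega))) (ih (by omega))
    · rw [hrej hfit]
      exact ih (by omega)

theorem min_mul_le_of_not_subset (hrun : IsGreedyRun c B fhat C Y) (hB : 0 < B)
    (hcmin : 0 < cmin) (hcmin_le : ∀ y, cmin ≤ c y) {cmax : ℝ} (hcmax : ∀ y, c y ≤ cmax)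
    (hcB : ∀ y, c y ≤ B) (hε : 0 ≤ ε) (happrox : ∀ Y, |fhat Y - f Y| ≤ ε / 2)
    (hf : ∀ A, 0 ≤ f A) (hmono : ∀ A A' : Finset ι, A ⊆ A' → f A ≤ f A')
    (hS : ∑ y ∈ S, c y ≤ B) (hγ₀ : 0 ≤ γ) (hγ₁ : γ ≤ 1)
    (hratio : ∀ t ≤ Fintype.card ι,
      γ * (f (S ∪ Y t) - f (Y t)) ≤ ∑ y ∈ S \ Y t, (f (insert y (Y t)) - f (Y t)))
    {γ₂ d : ℝ} (hγ₂₀ : 0 ≤ γ₂)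
    (hγ₂ : ∀ t ≤ Fintype.card ι, ∀ y ∉ Y t, B < c y + ∑ z ∈ Y t, c z →
      γ₂ * (f (insert y (Y t)) - f (Y t)) ≤ d)
    (hnot : ¬ S ⊆ Y (Fintype.card ι)) :
    min γ₂ 1 * ((1 - exp (-γ)) * f S) ≤
      d + f (Y (Fintype.card ι)) + 2 * ((B + cmax) / cmin * ε) := by
  obtain ⟨τ, hτ, hinv, s, -, hsY, hbest, hover⟩ := hrun.exists_first_rejection hnot
  set K := 2 * ((B + cmax) / cmin * ε)
  set cY := ∑ z ∈ Y τ, c z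
  have hgap := hrun.gap_le hB hcmin hcmin_le hcB hε happrox hf hmono hS hγ₀ hγ₁ hratio
    hτ.le (fun t ht => hinv t ht.le) le_rfl
  -- The rejected element `s` is added virtually: this overshoots the budget `B`.
  have hvirt := gap_insert_le hB hcmin hcmin_le hε happrox hmono hS (hf S) hγ₀ hγ₁ (hcB s)
    hsY (hratio τ hτ.le) (hbest.mono (hinv τ le_rfl)) hgap
  rw [sum_insert hsY] at hvirt
  have hexp : exp (-(γ * (c s + cY) / B)) * f S ≤ exp (-γ) * f S := by
    refine mul_le_mul_of_nonneg_right (exp_le_exp.mpr ?_) (hf S)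
    rw [neg_le_neg_iff, le_div_iff₀ hB]
    nlinarith
  have herr : 2 * (ε / cmin) * (c s + cY) ≤ K := by
    have : c s + cY ≤ B + cmax := by linarith [hcmax s, hrun.sum_sel_le hB.le hτ.le]
    calc 2 * (ε / cmin) * (c s + cY) ≤ 2 * (ε / cmin) * (B + cmax) := by gcongr
      _ = K := by ring
  have hK : 0 ≤ K := by
    have := hcmin.trans_le ((hcmin_le s).trans (hcmax s))
    positivity
  have hmin := min_mul_le_add_of_mul_sub_le (hf _) (hmono _ _ (subset_insert s (Y τ)))
    (hγ₂ τ hτ.le s hsY hover)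
  have hYτ : f (Y τ) ≤ f (Y (Fintype.card ι)) :=
    hmono _ _ (hrun.sel_subset_sel hτ.le le_rfl)
  have hm₀ : 0 ≤ min γ₂ 1 := le_min hγ₂₀ zero_le_one
  calc min γ₂ 1 * ((1 - exp (-γ)) * f S)
      = min γ₂ 1 * ((1 - exp (-γ)) * f S - K) + min γ₂ 1 * K := by ring
    _ ≤ min γ₂ 1 * f (insert s (Y τ)) + K :=
      add_le_add (mul_le_mul_of_nonneg_left (by linarith) hm₀)
        (mul_le_of_le_one_left hK (min_le_right γ₂ 1))
    _ ≤ d + f (Y (Fintype.card ι)) + K := by linarith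

theorem min_mul_le [Nonempty ι] (hrun : IsGreedyRun c B fhat C Y) (hB : 0 < B)
    (hcmin : 0 < cmin) (hcmin_le : ∀ y, cmin ≤ c y) {cmax : ℝ} (hcmax : ∀ y, c y ≤ cmax)
    (hcB : ∀ y, c y ≤ B) (hε : 0 ≤ ε) (happrox : ∀ Y, |fhat Y - f Y| ≤ ε / 2)
    (hf : ∀ A, 0 ≤ f A) (hmono : ∀ A A' : Finset ι, A ⊆ A' → f A ≤ f A')
    (hS : ∑ y ∈ S, c y ≤ B) (hγ₀ : 0 ≤ γ) (hγ₁ : γ ≤ 1)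
    (hratio : ∀ t ≤ Fintype.card ι,
      γ * (f (S ∪ Y t) - f (Y t)) ≤ ∑ y ∈ S \ Y t, (f (insert y (Y t)) - f (Y t)))
    {γ₂ d : ℝ} (hγ₂₀ : 0 ≤ γ₂)
    (hγ₂ : ∀ t ≤ Fintype.card ι, ∀ y ∉ Y t, B < c y + ∑ z ∈ Y t, c z →
      γ₂ * (f (insert y (Y t)) - f (Y t)) ≤ d)
    (hd : 0 ≤ d) :
    min γ₂ 1 * ((1 - exp (-γ)) * f S) ≤
      d + f (Y (Fintype.card ι)) + 2 * ((B + cmax) / cmin * ε) := by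
  by_cases hsub : S ⊆ Y (Fintype.card ι)
  · obtain ⟨y⟩ := ‹Nonempty ι›
    have hK : 0 ≤ (B + cmax) / cmin * ε :=
      mul_nonneg (div_nonneg (by linarith [hcmin_le y, hcmax y]) hcmin.le) hε
    have he : 0 ≤ 1 - exp (-γ) := sub_nonneg.mpr (exp_le_one_iff.mpr (by linarith))
    have h₁ : (1 - exp (-γ)) * f S ≤ f S :=
      mul_le_of_le_one_left (hf S) (by linarith [exp_pos (-γ)])
    have h₂ := mul_le_of_le_one_left (mul_nonneg he (hf S)) (min_le_right γ₂ 1)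
    linarith [hmono _ _ hsub]
  · exact hrun.min_mul_le_of_not_subset hB hcmin hcmin_le hcmax hcB hε happrox hf hmono hS hγ₀
      hγ₁ hratio hγ₂₀ hγ₂ hsub

end IsGreedyRun

theorem ratio_mem_Icc_of_isGreatest {f : Finset ι → ℝ} {Y : ℕ → Finset ι} {n : ℕ} {γ : ℝ}
    (hmono : ∀ A A' : Finset ι, A ⊆ A' → f A ≤ f A') (hY₀ : Y 0 = ∅)
    (hγ : IsGreatest {g : ℝ | ∀ A : Finset ι, ∀ t ≤ n,
      g * (f (A ∪ Y t) - f (Y t)) ≤ ∑ y ∈ A \ Y t, (f (insert y (Y t)) - f (Y t))} γ) :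
    γ ∈ Set.Icc 0 1 := by
  refine ⟨hγ.2 fun A t _ => ?_, ?_⟩
  · rw [zero_mul]
    exact sum_nonneg fun y _ => sub_nonneg.mpr (hmono _ _ (subset_insert y (Y t)))
  by_contra! hγ₁
  have hγA : ∀ A, γ * (f A - f ∅) ≤ ∑ y ∈ A, (f {y} - f ∅) := fun A => by
    simpa [hY₀] using hγ.1 A 0 (Nat.zero_le n)
  -- With `γ > 1` the ratio inequality forces `f` to be constant, and then every real qualifies.
  have hsingle : ∀ y, f {y} = f ∅ := fun y => by
    have := hγA {y}
    simp only [sum_singleton] at this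
    nlinarith [hmono ∅ {y} (empty_subset _)]
  have hconst : ∀ A, f A = f ∅ := fun A => by
    have := hγA A
    simp only [hsingle, sub_self, sum_const_zero] at this
    nlinarith [hmono ∅ A (empty_subset _)]
  have := hγ.2 (show γ + 1 ∈ _ from fun A t _ => by simp [hconst])
  linarith

end Greedy

theorem greedy_knapsack_nonsubmodular_guarantee_general
    {ι : Type*} [Fintype ι] [DecidableEq ι] [Nonempty ι]
    (c : ι → ℝ) (hc : ∀ y, 0 < c y)
    (B : ℝ) (hB : 0 < B) (hcB : ∀ y, c y ≤ B)
    (f : Finset ι → ℝ) (hfempty : f ∅ = 0) (hfnonneg : ∀ Y, 0 ≤ f Y)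
    (hmono : ∀ A B' : Finset ι, A ⊆ B' → f A ≤ f B')
    (ε : ℝ) (hε : 0 ≤ ε)
    (fhat : Finset ι → ℝ)
    (happrox : ∀ Y : Finset ι, |fhat Y - f Y| ≤ ε / 2)
    -- line 3: Y₁ = {y₁} maximizes f̂ over singletons
    (y₁ : ι)
    -- lines 4–11: the while loop
    (C Y : ℕ → Finset ι)
    (hC0 : C 0 = Finset.univ) (hY0 : Y 0 = ∅)
    (hstep : ∀ t < Fintype.card ι, ∃ ys ∈ C t,
      (∀ y ∈ C t, (fhat (insert y (Y t)) - fhat (Y t)) / c y ≤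
          (fhat (insert ys (Y t)) - fhat (Y t)) / c ys) ∧
        C (t + 1) = (C t).erase ys ∧
        (c ys + ∑ z ∈ Y t, c z ≤ B → Y (t + 1) = insert ys (Y t)) ∧
        (¬ c ys + ∑ z ∈ Y t, c z ≤ B → Y (t + 1) = Y t))
    -- line 12: the output Y_g
    (Yg : Finset ι)
    (hYgmax : fhat Yg = max (fhat {y₁}) (fhat (Y (Fintype.card ι))))
    -- γ₁: type-1 greedy submodularity ratio (largest real satisfying Eq. (33))
    (γ₁ : ℝ)
    (hγ₁ : IsGreatest {g : ℝ | ∀ A : Finset ι, ∀ t ≤ Fintype.card ι,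
      g * (f (A ∪ Y t) - f (Y t)) ≤
        ∑ y ∈ A \ Y t, (f (insert y (Y t)) - f (Y t))} γ₁)
    -- γ₂: type-2 greedy submodularity ratio (largest real satisfying Eq. (34))
    (γ₂ : ℝ)
    (hγ₂ : IsGreatest {g : ℝ | ∀ t ≤ Fintype.card ι, ∀ y ∉ Y t,
      B < c y + ∑ z ∈ Y t, c z →
        g * (f (insert y (Y t)) - f (Y t)) ≤ f {y₁} - f ∅} γ₂)
    -- Y* is an optimal solution of the knapsack-constrained problem
    (Ystar : Finset ι) (hfeas : ∑ y ∈ Ystar, c y ≤ B) :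
    f Yg ≥ (min γ₂ 1 / 2) * (1 - Real.exp (-γ₁)) * f Ystar -
      ((B + Finset.univ.sup' Finset.univ_nonempty c) /
          (Finset.univ.inf' Finset.univ_nonempty c) + 1) * ε := by
  set n := Fintype.card ι
  set cmin := univ.inf' univ_nonempty c
  set cmax := univ.sup' univ_nonempty c
  have hcmin : 0 < cmin := (lt_inf'_iff _).mpr fun y _ => hc y
  have hcmin_le : ∀ y, cmin ≤ c y := fun y => inf'_le c (mem_univ y)
  have hcmax : ∀ y, c y ≤ cmax := fun y => le_sup' c (mem_univ y)
  have hrun : IsGreedyRun c B fhat C Y := ⟨hC0, hY0, hstep⟩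
  obtain ⟨hγ₁₀, hγ₁₁⟩ := ratio_mem_Icc_of_isGreatest hmono hY0 hγ₁
  have hd : 0 ≤ f {y₁} - f ∅ := by simpa [hfempty] using hfnonneg {y₁}
  have hγ₂₀ : 0 ≤ γ₂ := hγ₂.2 fun t _ y _ _ => by simpa using hd
  have hbound := hrun.min_mul_le hB hcmin hcmin_le hcmax hcB hε happrox hfnonneg hmono hfeas
    hγ₁₀ hγ₁₁ (hγ₁.1 Ystar) hγ₂₀ hγ₂.1 hd
  have hout := max_sub_le_of_eq_max happrox hYgmax
  linarith [le_max_left (f {y₁}) (f (Y n)), le_max_right (f {y₁}) (f (Y n))]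

/-- Theorem 4: performance guarantee of the greedy algorithm
(Algorithm 2) for maximizing a monotone nondecreasing (not necessarily submodular)
nonnegative set function `f` with `f(∅) = 0`, evaluated through an approximate oracle
`f̂` with `|f̂(Y) − f(Y)| ≤ ε/2`, subject to a knapsack constraint `c(Y) ≤ B`.

The run of the algorithm is encoded by the sequences `C t` (remaining candidates) and
`Y t` (current greedy set) for `t = 0, …, |M̄|`; the sets `Y t`, `t ≤ |M̄|`, are exactly
the prefix sets `Y₂^j` of the final greedy set `Y₂ = Y |M̄|`.  `γ₁` and `γ₂` are the
type-1 and type-2 greedy submodularity ratios of `f` (Definition 7): the largest reals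
satisfying the respective inequalities relative to the greedy prefix sets.  Then
`f(Y_g) ≥ (min{γ₂,1}/2)(1 − e^{−γ₁}) f(Y*) − ((B + c_max)/c_min + 1) ε`. -/
theorem greedy_knapsack_nonsubmodular_guarantee
    {ι : Type*} [Fintype ι] [DecidableEq ι] [Nonempty ι]
    (c : ι → ℝ) (hc : ∀ y, 0 < c y)
    (B : ℝ) (hB : 0 < B) (hcB : ∀ y, c y ≤ B)
    (f : Finset ι → ℝ) (hfempty : f ∅ = 0) (hfnonneg : ∀ Y, 0 ≤ f Y)
    (hmono : ∀ A B' : Finset ι, A ⊆ B' → f A ≤ f B')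
    (ε : ℝ) (hε : 0 ≤ ε)
    (fhat : Finset ι → ℝ) (hfhatempty : fhat ∅ = 0)
    (happrox : ∀ Y : Finset ι, |fhat Y - f Y| ≤ ε / 2)
    -- line 3: Y₁ = {y₁} maximizes f̂ over singletons
    (y₁ : ι) (hy₁ : ∀ y : ι, fhat {y} ≤ fhat {y₁})
    -- lines 4–11: the while loop
    (C Y : ℕ → Finset ι)
    (hC0 : C 0 = Finset.univ) (hY0 : Y 0 = ∅)
    (hstep : ∀ t < Fintype.card ι, ∃ ys ∈ C t,
      (∀ y ∈ C t, (fhat (insert y (Y t)) - fhat (Y t)) / c y ≤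
          (fhat (insert ys (Y t)) - fhat (Y t)) / c ys) ∧
        C (t + 1) = (C t).erase ys ∧
        (c ys + ∑ z ∈ Y t, c z ≤ B → Y (t + 1) = insert ys (Y t)) ∧
        (¬ c ys + ∑ z ∈ Y t, c z ≤ B → Y (t + 1) = Y t))
    -- line 12: the output Y_g
    (Yg : Finset ι)
    (hYg : Yg = {y₁} ∨ Yg = Y (Fintype.card ι))
    (hYgmax : fhat Yg = max (fhat {y₁}) (fhat (Y (Fintype.card ι))))
    -- γ₁: type-1 greedy submodularity ratio (largest real satisfying Eq. (33))
    (γ₁ : ℝ)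
    (hγ₁ : IsGreatest {g : ℝ | ∀ A : Finset ι, ∀ t ≤ Fintype.card ι,
      g * (f (A ∪ Y t) - f (Y t)) ≤
        ∑ y ∈ A \ Y t, (f (insert y (Y t)) - f (Y t))} γ₁)
    -- γ₂: type-2 greedy submodularity ratio (largest real satisfying Eq. (34))
    (γ₂ : ℝ)
    (hγ₂ : IsGreatest {g : ℝ | ∀ t ≤ Fintype.card ι, ∀ y ∉ Y t,
      B < c y + ∑ z ∈ Y t, c z →
        g * (f (insert y (Y t)) - f (Y t)) ≤ f {y₁} - f ∅} γ₂)
    -- Y* is an optimal solution of the knapsack-constrained problem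
    (Ystar : Finset ι) (hfeas : ∑ y ∈ Ystar, c y ≤ B)
    (hopt : ∀ Z : Finset ι, ∑ y ∈ Z, c y ≤ B → f Z ≤ f Ystar) :
    f Yg ≥ (min γ₂ 1 / 2) * (1 - Real.exp (-γ₁)) * f Ystar -
      ((B + Finset.univ.sup' Finset.univ_nonempty c) /
          (Finset.univ.inf' Finset.univ_nonempty c) + 1) * ε :=
  greedy_knapsack_nonsubmodular_guarantee_general c hc B hB hcB f hfempty hfnonneg hmono ε hε fhat
    happrox y₁ C Y hC0 hY0 hstep Yg hYgmax γ₁ hγ₁ γ₂ hγ₂ Ystar hfeas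
end

section
/- Let M̄ be a finite set, F_p a 2×2 real symmetric positive definite matrix, and for each y ∈ M̄ let H_y be a 2×2 real symmetric positive semidefinite matrix; write H(Y) = ∑_{y∈Y} H_y and f_Pa(Y) = Tr(F_p⁻¹) − Tr((F_p + H(Y))⁻¹) for Y ⊆ M̄. Let Y ⊊ M̄ and let z ∈ argmin_{y ∈ M̄\Y} λ₂(F_p + H({y} ∪ Y)) / λ₁(F_p + H({y} ∪ Y)). Then for every A ⊆ M̄, ∑_{y ∈ A\Y} ( f_Pa({y} ∪ Y) − f_Pa(Y) ) ≥ [ λ₂(F_p + H(Y)) λ₂(F_p + H({z} ∪ Y)) / ( λ₁(F_p + H(Y)) λ₁(F_p + H({z} ∪ Y)) ) ] · ( f_Pa(A ∪ Y) − f_Pa(Y) ). -/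
/-!
Write `F(S) = F_p + H(S)`. For positive definite `P ≤ Q` (Loewner order) with eigenvalues
`p₁ ≥ p₂` and `q₁ ≥ q₂`, the characterisation `t • 1 ≤ M ↔ t ≤ λ₂(M)`, `M ≤ t • 1 ↔ λ₁(M) ≤ t`
gives `pᵢ ≤ qᵢ`, so `Tr P⁻¹ - Tr Q⁻¹ = ∑ᵢ (qᵢ - pᵢ) / (pᵢ qᵢ)` lies between
`(Tr Q - Tr P) / (p₁ q₁)` and `(Tr Q - Tr P) / (p₂ q₂)`. Apply the upper bound to
`F(Y) ≤ F(A ∪ Y)` and the lower bound to each `F(Y) ≤ F({y} ∪ Y)`: both are in terms of the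
traces `Tr H_y`, which add up over `A \ Y`. The choice of `z` together with
`λ₂(F({y} ∪ Y)) ≤ λ₂(F(A ∪ Y))` gives `λ₁(F({y} ∪ Y)) ≤ λ₁(F({z} ∪ Y)) λ₂(F(A ∪ Y)) / λ₂(F({z} ∪ Y))`,
which makes the per-element bounds uniform in `y`.
-/

open Matrix

/-- The largest eigenvalue `λ₁(P)` of a real symmetric `2 × 2` matrix `P`
(for a symmetric matrix `Tr(P)² − 4 det(P) ≥ 0` and the eigenvalues are
`(Tr(P) ± √(Tr(P)² − 4 det P))/2`). -/
noncomputable def eig1 (P : Matrix (Fin 2) (Fin 2) ℝ) : ℝ :=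
  (P.trace + Real.sqrt (P.trace ^ 2 - 4 * P.det)) / 2

/-- The smallest eigenvalue `λ₂(P)` of a real symmetric `2 × 2` matrix `P`. -/
noncomputable def eig2 (P : Matrix (Fin 2) (Fin 2) ℝ) : ℝ :=
  (P.trace - Real.sqrt (P.trace ^ 2 - 4 * P.det)) / 2

/-- The objective `f_Pa(Y) = Tr(F_p⁻¹) − Tr((F_p + ∑_{y∈Y} H_y)⁻¹)` of Eq. (28). -/
noncomputable def fPa {ι : Type*} [DecidableEq ι] (Fp : Matrix (Fin 2) (Fin 2) ℝ)
    (H : ι → Matrix (Fin 2) (Fin 2) ℝ) (Y : Finset ι) : ℝ :=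
  (Fp⁻¹).trace - ((Fp + ∑ y ∈ Y, H y)⁻¹).trace

open scoped MatrixOrder

section Eigenvalues

variable {M P Q : Matrix (Fin 2) (Fin 2) ℝ}

lemma eig1_add_eig2 (M : Matrix (Fin 2) (Fin 2) ℝ) : eig1 M + eig2 M = M.trace := by
  unfold eig1 eig2; ring

lemma eig2_le_eig1 (M : Matrix (Fin 2) (Fin 2) ℝ) : eig2 M ≤ eig1 M := by
  have := Real.sqrt_nonneg (M.trace ^ 2 - 4 * M.det)
  unfold eig1 eig2; linarith

lemma Matrix.IsHermitian.trace_sq_sub_four_mul_det_nonneg (hM : M.IsHermitian) :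
    0 ≤ M.trace ^ 2 - 4 * M.det := by
  rw [trace_fin_two, det_fin_two, ← hM.apply 0 1, star_trivial]
  nlinarith [sq_nonneg (M 0 0 - M 1 1), sq_nonneg (M 0 1)]

lemma eig1_mul_eig2 (hM : M.IsHermitian) : eig1 M * eig2 M = M.det := by
  have := Real.sq_sqrt hM.trace_sq_sub_four_mul_det_nonneg
  unfold eig1 eig2
  linear_combination (-1 / 4 : ℝ) * this

lemma det_smul_one_sub (hM : M.IsHermitian) (t : ℝ) :
    (t • 1 - M).det = (t - eig1 M) * (t - eig2 M) := by
  have : (t • 1 - M).det = t ^ 2 - t * M.trace + M.det := by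
    simp [det_fin_two, trace_fin_two]; ring
  rw [this, ← eig1_add_eig2, ← eig1_mul_eig2 hM]; ring

lemma det_sub_smul_one (hM : M.IsHermitian) (t : ℝ) :
    (M - t • 1).det = (t - eig1 M) * (t - eig2 M) := by
  rw [← neg_sub, det_neg, det_smul_one_sub hM]; simp

lemma Matrix.IsHermitian.posSemidef_iff_fin_two (hM : M.IsHermitian) :
    M.PosSemidef ↔ 0 ≤ M.trace ∧ 0 ≤ M.det := by
  refine ⟨fun h => ⟨h.trace_nonneg, h.det_nonneg⟩, fun ⟨htr, hdet⟩ => ?_⟩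
  rw [hM.trace_eq_sum_eigenvalues, Fin.sum_univ_two] at htr
  rw [hM.det_eq_prod_eigenvalues, Fin.prod_univ_two] at hdet
  simp only [RCLike.ofReal_real_eq_id, id] at htr hdet
  have h0 : 0 ≤ hM.eigenvalues 0 := by nlinarith
  have h1 : 0 ≤ hM.eigenvalues 1 := by nlinarith
  exact hM.posSemidef_iff_eigenvalues_nonneg.2 (Pi.le_def.2 (Fin.forall_fin_two.2 ⟨h0, h1⟩))

lemma smul_one_le_iff_le_eig2 (hM : M.IsHermitian) {t : ℝ} : t • 1 ≤ M ↔ t ≤ eig2 M := by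
  have hM' : (M - t • 1).IsHermitian := hM.sub (isHermitian_one.smul (IsSelfAdjoint.all t))
  rw [le_iff, hM'.posSemidef_iff_fin_two, det_sub_smul_one hM, trace_sub, trace_smul,
    trace_one, ← eig1_add_eig2]
  have := eig2_le_eig1 M
  simp only [Fintype.card_fin, Nat.cast_ofNat, smul_eq_mul]
  constructor
  · rintro ⟨htr, hdet⟩; nlinarith
  · intro h; constructor <;> nlinarith

lemma le_smul_one_iff_eig1_le (hM : M.IsHermitian) {t : ℝ} : M ≤ t • 1 ↔ eig1 M ≤ t := by
  have hM' : (t • 1 - M).IsHermitian := (isHermitian_one.smul (IsSelfAdjoint.all t)).sub hM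
  rw [le_iff, hM'.posSemidef_iff_fin_two, det_smul_one_sub hM, trace_sub, trace_smul,
    trace_one, ← eig1_add_eig2]
  have := eig2_le_eig1 M
  simp only [Fintype.card_fin, Nat.cast_ofNat, smul_eq_mul]
  constructor
  · rintro ⟨htr, hdet⟩; nlinarith
  · intro h; constructor <;> nlinarith

lemma eig2_mono (hP : P.IsHermitian) (hQ : Q.IsHermitian) (hPQ : P ≤ Q) : eig2 P ≤ eig2 Q :=
  (smul_one_le_iff_le_eig2 hQ).1 (((smul_one_le_iff_le_eig2 hP).2 le_rfl).trans hPQ)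

lemma eig1_mono (hP : P.IsHermitian) (hQ : Q.IsHermitian) (hPQ : P ≤ Q) : eig1 P ≤ eig1 Q :=
  (le_smul_one_iff_eig1_le hP).1 (hPQ.trans ((le_smul_one_iff_eig1_le hQ).2 le_rfl))

lemma eig2_pos (hM : M.PosDef) : 0 < eig2 M := by
  have htr : 0 < eig1 M + eig2 M := eig1_add_eig2 M ▸ hM.trace_pos
  have hdet : 0 < eig1 M * eig2 M := eig1_mul_eig2 hM.isHermitian ▸ hM.det_pos
  nlinarith [eig2_le_eig1 M]

lemma eig1_pos (hM : M.PosDef) : 0 < eig1 M := (eig2_pos hM).trans_le (eig2_le_eig1 M)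

lemma trace_inv_eq_inv_eig1_add_inv_eig2 (hM : M.PosDef) :
    M⁻¹.trace = (eig1 M)⁻¹ + (eig2 M)⁻¹ := by
  have h1 := (eig1_pos hM).ne'
  have h2 := (eig2_pos hM).ne'
  have htr : M⁻¹.trace = M.trace / M.det := by
    rw [inv_def, Ring.inverse_eq_inv', trace_smul, adjugate_fin_two, trace_fin_two_of,
      trace_fin_two, smul_eq_mul, add_comm (M 1 1)]
    ring
  rw [htr, ← eig1_add_eig2, ← eig1_mul_eig2 hM.isHermitian]
  field_simp; ring

lemma trace_inv_sub_trace_inv (hP : P.PosDef) (hQ : Q.PosDef) :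
    P⁻¹.trace - Q⁻¹.trace =
      (eig1 Q - eig1 P) / (eig1 P * eig1 Q) + (eig2 Q - eig2 P) / (eig2 P * eig2 Q) := by
  rw [trace_inv_eq_inv_eig1_add_inv_eig2 hP, trace_inv_eq_inv_eig1_add_inv_eig2 hQ,
    ← inv_sub_inv (eig1_pos hP).ne' (eig1_pos hQ).ne',
    ← inv_sub_inv (eig2_pos hP).ne' (eig2_pos hQ).ne']
  ring

lemma trace_inv_sub_trace_inv_le (hP : P.PosDef) (hPQ : P ≤ Q) :
    P⁻¹.trace - Q⁻¹.trace ≤ (Q.trace - P.trace) / (eig2 P * eig2 Q) := by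
  have hQ : Q.PosDef := by simpa using hP.add_posSemidef hPQ
  have := eig2_pos hP; have := eig2_pos hQ
  rw [trace_inv_sub_trace_inv hP hQ, ← eig1_add_eig2 P, ← eig1_add_eig2 Q]
  calc _ ≤ (eig1 Q - eig1 P) / (eig2 P * eig2 Q) + (eig2 Q - eig2 P) / (eig2 P * eig2 Q) := by
        gcongr ?_ + _
        exact div_le_div_of_nonneg_left
          (sub_nonneg.2 (eig1_mono hP.isHermitian hQ.isHermitian hPQ)) (by positivity)
          (mul_le_mul (eig2_le_eig1 P) (eig2_le_eig1 Q) (by positivity) (eig1_pos hP).le)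
    _ = _ := by ring

lemma div_le_trace_inv_sub_trace_inv (hP : P.PosDef) (hPQ : P ≤ Q) :
    (Q.trace - P.trace) / (eig1 P * eig1 Q) ≤ P⁻¹.trace - Q⁻¹.trace := by
  have hQ : Q.PosDef := by simpa using hP.add_posSemidef hPQ
  have := eig2_pos hP; have := eig2_pos hQ
  rw [trace_inv_sub_trace_inv hP hQ, ← eig1_add_eig2 P, ← eig1_add_eig2 Q]
  calc _ = (eig1 Q - eig1 P) / (eig1 P * eig1 Q) + (eig2 Q - eig2 P) / (eig1 P * eig1 Q) := by
        ring
    _ ≤ _ := by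
        gcongr _ + ?_
        exact div_le_div_of_nonneg_left
          (sub_nonneg.2 (eig2_mono hP.isHermitian hQ.isHermitian hPQ)) (by positivity)
          (mul_le_mul (eig2_le_eig1 P) (eig2_le_eig1 Q) (by positivity) (eig1_pos hP).le)

end Eigenvalues

section SensorSelection

variable {ι : Type*} {Fp : Matrix (Fin 2) (Fin 2) ℝ}
  {H : ι → Matrix (Fin 2) (Fin 2) ℝ}

lemma posDef_add_sum (hFp : Fp.PosDef) (hH : ∀ y, (H y).PosSemidef) (S : Finset ι) :
    (Fp + ∑ w ∈ S, H w).PosDef :=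
  hFp.add_posSemidef (posSemidef_sum S fun w _ => hH w)

lemma add_sum_le_add_sum (hH : ∀ y, (H y).PosSemidef) {S T : Finset ι} (hST : S ⊆ T) :
    Fp + ∑ w ∈ S, H w ≤ Fp + ∑ w ∈ T, H w :=
  add_le_add_right (Finset.sum_le_sum_of_subset_of_nonneg hST fun w _ _ => (hH w).nonneg) Fp

variable [DecidableEq ι]

lemma trace_add_sum_sub_trace_add_sum {S T : Finset ι} (hST : S ⊆ T) :
    (Fp + ∑ w ∈ T, H w).trace - (Fp + ∑ w ∈ S, H w).trace = ∑ w ∈ T \ S, (H w).trace := by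
  rw [trace_add, trace_add, trace_sum, trace_sum, Finset.sum_sdiff_eq_sub hST]
  ring

lemma fPa_sub_fPa (S T : Finset ι) :
    fPa Fp H T - fPa Fp H S = (Fp + ∑ w ∈ S, H w)⁻¹.trace - (Fp + ∑ w ∈ T, H w)⁻¹.trace := by
  unfold fPa; ring

lemma fPa_union_sub_fPa_le (hFp : Fp.PosDef) (hH : ∀ y, (H y).PosSemidef) (A Y : Finset ι) :
    fPa Fp H (A ∪ Y) - fPa Fp H Y ≤ (∑ w ∈ A \ Y, (H w).trace) /
      (eig2 (Fp + ∑ w ∈ Y, H w) * eig2 (Fp + ∑ w ∈ A ∪ Y, H w)) := by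
  have hY : Y ⊆ A ∪ Y := Finset.subset_union_right
  rw [fPa_sub_fPa, ← Finset.union_sdiff_right, ← trace_add_sum_sub_trace_add_sum hY]
  exact trace_inv_sub_trace_inv_le (posDef_add_sum hFp hH Y) (add_sum_le_add_sum hH hY)

lemma trace_div_le_fPa_insert_sub_fPa (hFp : Fp.PosDef) (hH : ∀ y, (H y).PosSemidef)
    {Y : Finset ι} {y : ι} (hy : y ∉ Y) :
    (H y).trace / (eig1 (Fp + ∑ w ∈ Y, H w) * eig1 (Fp + ∑ w ∈ insert y Y, H w)) ≤
      fPa Fp H (insert y Y) - fPa Fp H Y := by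
  have hY : Y ⊆ insert y Y := Finset.subset_insert y Y
  rw [fPa_sub_fPa, ← Finset.sum_singleton (fun w => (H w).trace) y,
    ← Finset.insert_sdiff_cancel hy, ← trace_add_sum_sub_trace_add_sum hY]
  exact div_le_trace_inv_sub_trace_inv (posDef_add_sum hFp hH Y) (add_sum_le_add_sum hH hY)

lemma trace_mul_le_fPa_insert_sub_fPa (hFp : Fp.PosDef) (hH : ∀ y, (H y).PosSemidef)
    {A Y : Finset ι} {y z : ι} (hyA : y ∈ A) (hyY : y ∉ Y)
    (hyz : eig2 (Fp + ∑ w ∈ insert z Y, H w) / eig1 (Fp + ∑ w ∈ insert z Y, H w) ≤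
      eig2 (Fp + ∑ w ∈ insert y Y, H w) / eig1 (Fp + ∑ w ∈ insert y Y, H w)) :
    (H y).trace * (eig2 (Fp + ∑ w ∈ insert z Y, H w) / (eig1 (Fp + ∑ w ∈ Y, H w) *
      eig1 (Fp + ∑ w ∈ insert z Y, H w) * eig2 (Fp + ∑ w ∈ A ∪ Y, H w))) ≤
      fPa Fp H (insert y Y) - fPa Fp H Y := by
  have hF := posDef_add_sum hFp hH
  have hyAY : insert y Y ⊆ A ∪ Y :=
    Finset.insert_subset (Finset.mem_union_left Y hyA) Finset.subset_union_right
  have hv := eig2_mono (hF _).isHermitian (hF _).isHermitian (add_sum_le_add_sum hH hyAY)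
  refine le_trans ?_ (trace_div_le_fPa_insert_sub_fPa hFp hH hyY)
  rw [div_le_div_iff₀ (eig1_pos (hF _)) (eig1_pos (hF _))] at hyz
  have hzyA := hyz.trans (mul_le_mul_of_nonneg_right hv (eig1_pos (hF (insert z Y))).le)
  have := eig1_pos (hF Y); have := eig1_pos (hF (insert y Y))
  have := eig1_pos (hF (insert z Y)); have := eig2_pos (hF (A ∪ Y))
  rw [div_eq_mul_one_div (H y).trace]
  refine mul_le_mul_of_nonneg_left ?_ (hH y).trace_nonneg
  rw [div_le_div_iff₀ (by positivity) (by positivity)]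
  nlinarith [mul_le_mul_of_nonneg_left hzyA (eig1_pos (hF Y)).le]

end SensorSelection

theorem fPa_submodularity_ratio_lower_bound_general
    {ι : Type*} [DecidableEq ι]
    (Fp : Matrix (Fin 2) (Fin 2) ℝ) (H : ι → Matrix (Fin 2) (Fin 2) ℝ)
    (hFp : Fp.PosDef) (hH : ∀ y, (H y).PosSemidef)
    (Y : Finset ι)
    (z : ι)
    (hzmin : ∀ y ∉ Y,
      eig2 (Fp + ∑ w ∈ insert z Y, H w) / eig1 (Fp + ∑ w ∈ insert z Y, H w) ≤
        eig2 (Fp + ∑ w ∈ insert y Y, H w) / eig1 (Fp + ∑ w ∈ insert y Y, H w)) :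
    ∀ A : Finset ι,
      (eig2 (Fp + ∑ w ∈ Y, H w) * eig2 (Fp + ∑ w ∈ insert z Y, H w) /
          (eig1 (Fp + ∑ w ∈ Y, H w) * eig1 (Fp + ∑ w ∈ insert z Y, H w))) *
          (fPa Fp H (A ∪ Y) - fPa Fp H Y) ≤
        ∑ y ∈ A \ Y, (fPa Fp H (insert y Y) - fPa Fp H Y) := by
  intro A
  have hF := posDef_add_sum hFp hH
  have := eig2_pos (hF Y); have := eig2_pos (hF (insert z Y)); have := eig2_pos (hF (A ∪ Y))
  have := eig1_pos (hF Y); have := eig1_pos (hF (insert z Y))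
  calc _ ≤ eig2 (Fp + ∑ w ∈ Y, H w) * eig2 (Fp + ∑ w ∈ insert z Y, H w) /
          (eig1 (Fp + ∑ w ∈ Y, H w) * eig1 (Fp + ∑ w ∈ insert z Y, H w)) *
          ((∑ w ∈ A \ Y, (H w).trace) /
            (eig2 (Fp + ∑ w ∈ Y, H w) * eig2 (Fp + ∑ w ∈ A ∪ Y, H w))) := by
        gcongr
        exact fPa_union_sub_fPa_le hFp hH A Y
    _ = ∑ y ∈ A \ Y, (H y).trace * (eig2 (Fp + ∑ w ∈ insert z Y, H w) /
          (eig1 (Fp + ∑ w ∈ Y, H w) * eig1 (Fp + ∑ w ∈ insert z Y, H w) *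
            eig2 (Fp + ∑ w ∈ A ∪ Y, H w))) := by
        rw [← Finset.sum_mul]
        field_simp
    _ ≤ _ := Finset.sum_le_sum fun y hy => (Finset.mem_sdiff.1 hy).elim fun hyA hyY =>
        trace_mul_le_fPa_insert_sub_fPa hFp hH hyA hyY (hzmin y hyY)

/-- Lemma 4 / Eq. (44): lower bound on the type-1 greedy
submodularity quantity of `f_Pa` at a set `Y ⊊ M̄`, where
`z ∈ argmin_{y∈M̄\Y} λ₂(F_p + H({y}∪Y))/λ₁(F_p + H({y}∪Y))`. -/
theorem fPa_submodularity_ratio_lower_bound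
    {ι : Type*} [Fintype ι] [DecidableEq ι]
    (Fp : Matrix (Fin 2) (Fin 2) ℝ) (H : ι → Matrix (Fin 2) (Fin 2) ℝ)
    (hFp : Fp.PosDef) (hH : ∀ y, (H y).PosSemidef)
    (Y : Finset ι) (hY : Y ⊂ Finset.univ)
    (z : ι) (hz : z ∉ Y)
    (hzmin : ∀ y ∉ Y,
      eig2 (Fp + ∑ w ∈ insert z Y, H w) / eig1 (Fp + ∑ w ∈ insert z Y, H w) ≤
        eig2 (Fp + ∑ w ∈ insert y Y, H w) / eig1 (Fp + ∑ w ∈ insert y Y, H w)) :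
    ∀ A : Finset ι,
      (eig2 (Fp + ∑ w ∈ Y, H w) * eig2 (Fp + ∑ w ∈ insert z Y, H w) /
          (eig1 (Fp + ∑ w ∈ Y, H w) * eig1 (Fp + ∑ w ∈ insert z Y, H w))) *
          (fPa Fp H (A ∪ Y) - fPa Fp H Y) ≤
        ∑ y ∈ A \ Y, (fPa Fp H (insert y Y) - fPa Fp H Y) :=
  fPa_submodularity_ratio_lower_bound_general Fp H hFp hH Y z hzmin
end
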